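/- arXiv:1207.1329 — 8 statements merged into one kernel-verified Lean document; each statement's English description precedes it below -/
import Mathlib

section
/- Let Γ₁ → Γ be a surjective homomorphism of finite groups, and let L be a Γ-lattice (a finitely generated free abelian group with Γ-action), viewed as a Γ₁-lattice via the surjection. If L is quasi-permutation as a Γ₁-lattice (i.e., fits into a short exact sequence 0 → L → P → P' → 0 with P, P' permutation Γ₁-lattices), then L is quasi-permutation as a Γ-lattice. -/
/-! Basic definitions: Γ-lattices, permutation / quasi-permutation / invertible /
quasi-invertible lattices, group cohomology via inhomogeneous cochains,
Tate–Shafarevich groups, and the lattice `J_Γ = ℤ[Γ]/ℤ`. -/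

/-- A bundled additive module with an action of the group `Γ`. -/
structure GammaMod (Γ : Type) [Group Γ] : Type 1 where
  carrier : Type
  [acg : AddCommGroup carrier]
  [act : DistribMulAction Γ carrier]

attribute [instance] GammaMod.acg GammaMod.act

section Lattices

variable {Γ : Type} [Group Γ]

/-- A permutation `Γ`-lattice: it admits a finite `ℤ`-basis permuted by `Γ`. -/
def IsPermutation (P : GammaMod Γ) : Prop :=
  ∃ (ι : Type) (_ : Fintype ι) (b : Module.Basis ι ℤ P.carrier),
    ∀ (γ : Γ) (i : ι), ∃ j, γ • (b i) = b j

/-- A `Γ`-equivariant additive map. -/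
def IsEquivariant {A B : GammaMod Γ} (f : A.carrier →+ B.carrier) : Prop :=
  ∀ (γ : Γ) (x : A.carrier), f (γ • x) = γ • f x

/-- `0 → A → B → C → 0` is short exact. -/
def IsShortExact {A B C : GammaMod Γ} (f : A.carrier →+ B.carrier)
    (g : B.carrier →+ C.carrier) : Prop :=
  Function.Injective f ∧ Function.Surjective g ∧ ∀ y, g y = 0 ↔ y ∈ Set.range f

/-- A quasi-permutation `Γ`-lattice: it fits into a short exact sequence
`0 → L → P → P' → 0` with `P`, `P'` permutation lattices. -/
def IsQuasiPermutation (L : GammaMod Γ) : Prop :=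
  ∃ (P P' : GammaMod Γ), IsPermutation P ∧ IsPermutation P' ∧
    ∃ (f : L.carrier →+ P.carrier) (g : P.carrier →+ P'.carrier),
      IsEquivariant f ∧ IsEquivariant g ∧ IsShortExact f g

/-- `A` is a direct summand of `B` (equivariantly). -/
def IsDirectSummandOf (A B : GammaMod Γ) : Prop :=
  ∃ (i : A.carrier →+ B.carrier) (r : B.carrier →+ A.carrier),
    IsEquivariant i ∧ IsEquivariant r ∧ r.comp i = AddMonoidHom.id _

/-- An invertible `Γ`-lattice: a direct summand of a permutation lattice. -/
def IsInvertibleLat (I : GammaMod Γ) : Prop :=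
  ∃ P : GammaMod Γ, IsPermutation P ∧ IsDirectSummandOf I P

/-- A quasi-invertible `Γ`-lattice: a direct summand of a quasi-permutation lattice. -/
def IsQuasiInvertible (L : GammaMod Γ) : Prop :=
  ∃ Q : GammaMod Γ, IsQuasiPermutation Q ∧ IsDirectSummandOf L Q

end Lattices

/-- The action of `G` on an invariant additive subgroup. -/
def subAction {G M : Type} [Group G] [AddCommGroup M] [DistribMulAction G M]
    (S : AddSubgroup M) (h : ∀ (g : G) (x : M), x ∈ S → g • x ∈ S) :
    DistribMulAction G S where
  smul g x := ⟨g • (x : M), h g x x.2⟩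
  one_smul x := Subtype.ext (one_smul G (x : M))
  mul_smul g g' x := Subtype.ext (mul_smul g g' (x : M))
  smul_zero g := Subtype.ext (smul_zero g)
  smul_add g x y := Subtype.ext (smul_add g (x : M) (y : M))

section Cohomology

variable (G : Type) [Group G] (M : Type) [AddCommGroup M] [DistribMulAction G M]

/-- Inhomogeneous 2-cocycle condition. -/
def IsCocycle2 (f : G → G → M) : Prop :=
  ∀ g h k : G, g • f h k + f g (h * k) = f (g * h) k + f g h

/-- Inhomogeneous 2-coboundary condition. -/
def IsCoboundary2 (f : G → G → M) : Prop :=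
  ∃ φ : G → M, ∀ g h : G, f g h = g • φ h + φ g - φ (g * h)

/-- Inhomogeneous 3-cocycle condition. -/
def IsCocycle3 (f : G → G → G → M) : Prop :=
  ∀ g h k l : G,
    g • f h k l + f g (h * k) l + f g h k = f (g * h) k l + f g h (k * l)

/-- Inhomogeneous 3-coboundary condition. -/
def IsCoboundary3 (f : G → G → G → M) : Prop :=
  ∃ φ : G → G → M, ∀ g h k : G,
    f g h k = g • φ h k - φ (g * h) k + φ g (h * k) - φ g h

/-- The subgroup of 2-cocycles. -/
def cocycles2 : AddSubgroup (G → G → M) where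
  carrier := {f | IsCocycle2 G M f}
  add_mem' := by
    intro f g hf hg a b c
    have := congrArg₂ (· + ·) (hf a b c) (hg a b c)
    simp only [Pi.add_apply, smul_add]
    abel_nf at this ⊢
    exact this
  zero_mem' := by intro a b c; simp
  neg_mem' := by
    intro f hf a b c
    have := congrArg Neg.neg (hf a b c)
    simp only [Pi.neg_apply, smul_neg]
    abel_nf at this ⊢
    exact this

/-- The subgroup of 2-coboundaries. -/
def coboundaries2 : AddSubgroup (G → G → M) where
  carrier := {f | IsCoboundary2 G M f}
  add_mem' := by
    rintro f g ⟨φ, hφ⟩ ⟨ψ, hψ⟩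
    refine ⟨φ + ψ, fun a b => ?_⟩
    simp only [Pi.add_apply, smul_add, hφ a b, hψ a b]
    abel
  zero_mem' := ⟨0, by intro a b; simp⟩
  neg_mem' := by
    rintro f ⟨φ, hφ⟩
    refine ⟨-φ, fun a b => ?_⟩
    simp only [Pi.neg_apply, smul_neg, hφ a b]
    abel

/-- The subgroup of 3-cocycles. -/
def cocycles3 : AddSubgroup (G → G → G → M) where
  carrier := {f | IsCocycle3 G M f}
  add_mem' := by
    intro f g hf hg a b c d
    have := congrArg₂ (· + ·) (hf a b c d) (hg a b c d)
    simp only [Pi.add_apply, smul_add]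
    abel_nf at this ⊢
    exact this
  zero_mem' := by intro a b c d; simp
  neg_mem' := by
    intro f hf a b c d
    have := congrArg Neg.neg (hf a b c d)
    simp only [Pi.neg_apply, smul_neg]
    abel_nf at this ⊢
    exact this

/-- The subgroup of 3-coboundaries. -/
def coboundaries3 : AddSubgroup (G → G → G → M) where
  carrier := {f | IsCoboundary3 G M f}
  add_mem' := by
    rintro f g ⟨φ, hφ⟩ ⟨ψ, hψ⟩
    refine ⟨φ + ψ, fun a b c => ?_⟩
    simp only [Pi.add_apply, smul_add, hφ a b c, hψ a b c]
    abel
  zero_mem' := ⟨0, by intro a b c; simp⟩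
  neg_mem' := by
    rintro f ⟨φ, hφ⟩
    refine ⟨-φ, fun a b c => ?_⟩
    simp only [Pi.neg_apply, smul_neg, hφ a b c]
    abel

/-- Third group cohomology `H³(G, M)`, via inhomogeneous cochains. -/
abbrev H3 := cocycles3 G M ⧸ ((coboundaries3 G M).addSubgroupOf (cocycles3 G M))

/-- The subgroup of 2-cocycles whose restriction to every cyclic subgroup is a
coboundary. -/
def shaCocycles : AddSubgroup (G → G → M) where
  carrier := {f | IsCocycle2 G M f ∧ ∀ (C : Subgroup G), IsCyclic C →
      IsCoboundary2 C M (fun a b : C => f a b)}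
  add_mem' := by
    rintro f g ⟨hf1, hf2⟩ ⟨hg1, hg2⟩
    refine ⟨(cocycles2 G M).add_mem hf1 hg1, fun C hC => ?_⟩
    obtain ⟨φ, hφ⟩ := hf2 C hC
    obtain ⟨ψ, hψ⟩ := hg2 C hC
    refine ⟨φ + ψ, fun a b => ?_⟩
    simp only [Pi.add_apply, smul_add, hφ a b, hψ a b]
    abel
  zero_mem' := by
    refine ⟨(cocycles2 G M).zero_mem, fun C hC => ⟨0, by intro a b; simp⟩⟩
  neg_mem' := by
    rintro f ⟨hf1, hf2⟩
    refine ⟨(cocycles2 G M).neg_mem hf1, fun C hC => ?_⟩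
    obtain ⟨φ, hφ⟩ := hf2 C hC
    refine ⟨-φ, fun a b => ?_⟩
    simp only [Pi.neg_apply, smul_neg, hφ a b]
    abel

/-- The Tate–Shafarevich group `Ш²(G, M)`: the kernel of
`H²(G,M) → ∏_C H²(C,M)` over all cyclic subgroups `C ⊆ G`, realized as
(locally trivial 2-cocycles) / (2-coboundaries). -/
abbrev Sha2 := shaCocycles G M ⧸ ((coboundaries2 G M).addSubgroupOf (shaCocycles G M))

end Cohomology

/-- `M` with the trivial action of `G`. -/
def TrivAct (G M : Type) : Type := M

instance (G M : Type) [AddCommGroup M] : AddCommGroup (TrivAct G M) :=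
  inferInstanceAs (AddCommGroup M)

instance (G M : Type) [Group G] [AddCommGroup M] : DistribMulAction G (TrivAct G M) where
  smul _ m := m
  one_smul _ := rfl
  mul_smul _ _ _ := rfl
  smul_zero _ := rfl
  smul_add _ _ _ := rfl

section JGamma

/-- The subgroup of `ℤ[Γ] = (Γ → ℤ)` generated by the norm element `∑_{s∈Γ} s`
(the constant function `1`). -/
def normSub (Γ : Type) : AddSubgroup (Γ → ℤ) :=
  AddSubgroup.zmultiples (fun _ => (1 : ℤ))

/-- The lattice `J_Γ = ℤ[Γ]/ℤ`, the cokernel of the norm map `ℤ → ℤ[Γ]`.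
Here `ℤ[Γ]` is modelled as functions `Γ → ℤ` with `Γ` acting by left translation;
the norm element is the constant function `1`. -/
abbrev JLat (Γ : Type) := (Γ → ℤ) ⧸ normSub Γ

variable {Γ : Type} [Group Γ]

/-- Left translation on `ℤ[Γ] = (Γ → ℤ)`. -/
def shiftHom (g : Γ) : (Γ → ℤ) →+ (Γ → ℤ) where
  toFun f := fun h => f (g⁻¹ * h)
  map_zero' := rfl
  map_add' _ _ := rfl

instance : DistribMulAction Γ (JLat Γ) where
  smul g := fun x => QuotientAddGroup.map _ _ (shiftHom g)
    (by rintro f ⟨n, rfl⟩; exact ⟨n, rfl⟩) x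
  one_smul := by
    intro x
    refine QuotientAddGroup.induction_on x fun f => ?_
    show QuotientAddGroup.map _ _ _ _ _ = _
    rw [QuotientAddGroup.map_mk]
    congr 1
    funext h
    simp [shiftHom]
  mul_smul := by
    intro g g' x
    refine QuotientAddGroup.induction_on x fun f => ?_
    show QuotientAddGroup.map _ _ _ _ _ =
      QuotientAddGroup.map _ _ _ _ (QuotientAddGroup.map _ _ _ _ _)
    rw [QuotientAddGroup.map_mk, QuotientAddGroup.map_mk, QuotientAddGroup.map_mk]
    congr 1
    funext h
    simp [shiftHom, mul_assoc]
  smul_zero := by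
    intro g
    exact map_zero (QuotientAddGroup.map _ _ (shiftHom g)
      (by rintro f ⟨n, rfl⟩; exact ⟨n, rfl⟩))
  smul_add := by
    intro g x y
    exact map_add (QuotientAddGroup.map _ _ (shiftHom g)
      (by rintro f ⟨n, rfl⟩; exact ⟨n, rfl⟩)) x y

end JGamma

/-! Take invariants under `Γ₀ = ker (Γ₁ → Γ)` in a sequence `0 → L → P → P' → 0` of
`Γ₁`-lattices; `Γ` acts on them, and `L` is unchanged since `Γ₀` acts trivially on it.
If `Γ₁` permutes a basis of `P`, the `Γ₀`-invariants of `P` have as basis the sums over the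
`Γ₀`-orbits of that basis, which `Γ₁` permutes because `Γ₀` is normal. Taking invariants
stays exact on the right since `H¹(Γ₀, L) = 0`: if `x ∈ P` maps to a `Γ₀`-invariant element
and `δ ∈ Γ₀`, then `d = δ • x - x` lies in `L`, so `δ ^ k • x = x + k • d`, and `k = orderOf δ`
gives `k • d = 0`, hence `d = 0` as `P` is torsion-free. -/

open MulAction

section Invariants

variable {G : Type} [Group G]

def fixedSubmodule (N : Subgroup G) (M : Type) [AddCommGroup M] [DistribMulAction G M] :
    Submodule ℤ M :=
  (FixedPoints.addSubgroup N M).toIntSubmodule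

variable {N : Subgroup G} {M : Type} [AddCommGroup M] [DistribMulAction G M]

theorem mem_fixedSubmodule {x : M} : x ∈ fixedSubmodule N M ↔ ∀ n ∈ N, n • x = x :=
  Subtype.forall

theorem smul_mem_fixedSubmodule [N.Normal] (g : G) {x : M} (hx : x ∈ fixedSubmodule N M) :
    g • x ∈ fixedSubmodule N M :=
  smul_mem_fixedPoints_of_normal g hx

theorem smul_eq_smul_of_mem_fixedSubmodule_ker {Γ : Type} [Group Γ] {φ : G →* Γ} {g g' : G}
    (h : φ g = φ g') {x : M} (hx : x ∈ fixedSubmodule φ.ker M) : g • x = g' • x := by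
  have hker : g'⁻¹ * g ∈ φ.ker := by
    rw [MonoidHom.mem_ker, map_mul, map_inv, h, inv_mul_cancel]
  calc g • x = g' • (g'⁻¹ * g) • x := by rw [smul_smul, mul_inv_cancel_left]
    _ = g' • x := by rw [mem_fixedSubmodule.mp hx _ hker]

theorem smul_eq_self_of_smul_sub_fixed [IsAddTorsionFree M] {g : G} (hg : IsOfFinOrder g)
    {x : M} (h : g • (g • x - x) = g • x - x) : g • x = x := by
  have hfix : ∀ k : ℕ, g ^ k • (g • x - x) = g • x - x := by
    intro k
    induction k with
    | zero => simp
    | succ k ih => rw [pow_succ, mul_smul, h, ih]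
  have hpow : ∀ k : ℕ, g ^ k • x = x + k • (g • x - x) := by
    intro k
    induction k with
    | zero => simp
    | succ k ih =>
      calc g ^ (k + 1) • x = g ^ k • x + g ^ k • (g • x - x) := by
            rw [pow_succ, mul_smul, smul_sub]; abel
        _ = x + (k + 1) • (g • x - x) := by rw [ih, hfix, succ_nsmul]; abel
  have hzero := hpow (orderOf g)
  rwa [pow_orderOf_eq_one, one_smul, left_eq_add,
    nsmul_eq_zero_iff_right (orderOf_pos_iff.mpr hg).ne', sub_eq_zero] at hzero

end Invariants

-- `Γ` acts through an arbitrary section of `φ`; on `ker φ`-invariants the choice is irrelevant.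
noncomputable def kerInvariants {Γ₁ Γ : Type} [Group Γ₁] [Group Γ] (φ : Γ₁ →* Γ)
    (hφ : Function.Surjective φ) (M : GammaMod Γ₁) : GammaMod Γ where
  carrier := fixedSubmodule φ.ker M.carrier
  act :=
    { smul γ x := ⟨Function.surjInv hφ γ • (x : M.carrier), smul_mem_fixedSubmodule _ x.2⟩
      one_smul x := Subtype.ext <|
        (smul_eq_smul_of_mem_fixedSubmodule_ker
          (by rw [Function.surjInv_eq hφ, map_one]) x.2).trans (one_smul _ _)
      mul_smul γ γ' x := Subtype.ext <| by
        show _ = Function.surjInv hφ γ • Function.surjInv hφ γ' • (x : M.carrier)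
        rw [← mul_smul]
        exact smul_eq_smul_of_mem_fixedSubmodule_ker (by simp [Function.surjInv_eq hφ]) x.2
      smul_zero γ := Subtype.ext (smul_zero _)
      smul_add γ x y := Subtype.ext (smul_add _ (x : M.carrier) y) }

theorem exists_basis_smul_eq_of_isPermutation {G : Type} [Group G] {P : GammaMod G}
    (hP : IsPermutation P) :
    ∃ (ι : Type) (_ : Fintype ι) (_ : MulAction G ι) (b : Module.Basis ι ℤ P.carrier),
      ∀ (g : G) (i : ι), b (g • i) = g • b i := by
  obtain ⟨ι, _, b, hb⟩ := hP
  choose σ hσ using hb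
  let _ : MulAction G ι :=
    { smul := σ
      one_smul i := b.injective ((hσ 1 i).symm.trans (one_smul G (b i)))
      mul_smul g g' i := b.injective <| by
        change b (σ (g * g') i) = b (σ g (σ g' i))
        rw [← hσ, ← hσ, ← hσ, mul_smul] }
  exact ⟨ι, inferInstance, inferInstance, b, fun g i => (hσ g i).symm⟩

section OrbitSums

variable {G ι M : Type} [Group G] [MulAction G ι] [AddCommGroup M] {N : Subgroup G}

theorem orbitRel_mk_smul_eq_mk_smul_iff [N.Normal] (g : G) (i j : ι) :
    Quotient.mk (orbitRel N ι) (g • i) = Quotient.mk (orbitRel N ι) (g • j) ↔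
      Quotient.mk (orbitRel N ι) i = Quotient.mk (orbitRel N ι) j := by
  simp only [Quotient.eq, orbitRel_apply, ← smul_orbit_eq_orbit_smul, Set.smul_mem_smul_set_iff]

variable [Fintype ι] (N) (b : Module.Basis ι ℤ M)

-- `F ↦ ∑ i, F ⟦i⟧ • b i`, which sends the indicator of an orbit to the sum over that orbit.
noncomputable def orbitSumMap : (orbitRel.Quotient N ι → ℤ) →ₗ[ℤ] M :=
  b.equivFun.symm.toLinearMap ∘ₗ LinearMap.funLeft ℤ ℤ (Quotient.mk (orbitRel N ι))

variable {N b}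

theorem equivFun_orbitSumMap (F : orbitRel.Quotient N ι → ℤ) (i : ι) :
    b.equivFun (orbitSumMap N b F) i = F (Quotient.mk _ i) :=
  congrFun (b.equivFun.apply_symm_apply _) i

theorem orbitSumMap_injective : Function.Injective (orbitSumMap N b) :=
  b.equivFun.symm.injective.comp
    (LinearMap.funLeft_injective_of_surjective _ _ _ Quotient.mk_surjective)

variable [DistribMulAction G M]

theorem Module.Basis.equivFun_smul (hb : ∀ (g : G) (i : ι), b (g • i) = g • b i) (g : G)
    (x : M) (j : ι) : b.equivFun (g • x) j = b.equivFun x (g⁻¹ • j) := by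
  suffices b.equivFun (g • x) = fun j => b.equivFun x (g⁻¹ • j) from congrFun this j
  apply b.equivFun.symm.injective
  rw [LinearEquiv.symm_apply_apply, Module.Basis.equivFun_symm_apply]
  conv_lhs => rw [← b.sum_equivFun x]
  rw [Finset.smul_sum]
  exact Fintype.sum_equiv (MulAction.toPerm g) _ _ (fun i => by simp [smul_comm g, hb])

theorem range_orbitSumMap (hb : ∀ (g : G) (i : ι), b (g • i) = g • b i) :
    LinearMap.range (orbitSumMap N b) = fixedSubmodule N M := by
  ext x
  constructor
  · rintro ⟨F, rfl⟩
    refine mem_fixedSubmodule.mpr fun n hn => b.equivFun.injective (funext fun j => ?_)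
    rw [b.equivFun_smul hb, equivFun_orbitSumMap, equivFun_orbitSumMap]
    exact congrArg F (Quotient.sound ⟨⟨n⁻¹, inv_mem hn⟩, rfl⟩)
  · intro hx
    refine ⟨fun c => b.equivFun x c.out, b.equivFun.injective (funext fun i => ?_)⟩
    obtain ⟨n, hn⟩ := orbitRel_apply.mp (Quotient.mk_out (s := orbitRel N ι) i)
    have hout : (Quotient.mk (orbitRel N ι) i).out = (n : G) • i := hn.symm
    rw [equivFun_orbitSumMap, hout, ← inv_inv (n : G), ← b.equivFun_smul hb,
      mem_fixedSubmodule.mp hx _ (inv_mem n.2)]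

theorem smul_orbitSumMap_single [N.Normal] [DecidableEq (orbitRel.Quotient N ι)]
    (hb : ∀ (g : G) (i : ι), b (g • i) = g • b i) (g : G) (c : orbitRel.Quotient N ι) :
    g • orbitSumMap N b (Pi.single c 1) =
      orbitSumMap N b (Pi.single (Quotient.mk _ (g • c.out)) 1) := by
  refine b.equivFun.injective (funext fun j => ?_)
  have hmem : Quotient.mk (orbitRel N ι) (g⁻¹ • j) = c ↔
      Quotient.mk (orbitRel N ι) j = Quotient.mk _ (g • c.out) := by
    conv_lhs => rw [← Quotient.out_eq c, ← orbitRel_mk_smul_eq_mk_smul_iff g, smul_inv_smul]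
  rw [b.equivFun_smul hb, equivFun_orbitSumMap, equivFun_orbitSumMap]
  simp only [Pi.single_apply, hmem]

noncomputable def orbitSumBasis (hb : ∀ (g : G) (i : ι), b (g • i) = g • b i) :
    Module.Basis (orbitRel.Quotient N ι) ℤ (fixedSubmodule N M) :=
  (Pi.basisFun ℤ _).map
    (LinearEquiv.ofInjective _ orbitSumMap_injective ≪≫ₗ
      LinearEquiv.ofEq _ _ (range_orbitSumMap hb))

theorem coe_orbitSumBasis [DecidableEq (orbitRel.Quotient N ι)]
    (hb : ∀ (g : G) (i : ι), b (g • i) = g • b i) (c : orbitRel.Quotient N ι) :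
    (orbitSumBasis hb c : M) = orbitSumMap N b (Pi.single c 1) := by
  rw [orbitSumBasis, Module.Basis.map_apply, Pi.basisFun_apply]
  rfl

end OrbitSums

theorem IsPermutation.kerInvariants {Γ₁ Γ : Type} [Group Γ₁] [Group Γ] {φ : Γ₁ →* Γ}
    (hφ : Function.Surjective φ) {P : GammaMod Γ₁} (hP : IsPermutation P) :
    IsPermutation (kerInvariants φ hφ P) := by
  classical
  obtain ⟨ι, _, _, b, hb⟩ := exists_basis_smul_eq_of_isPermutation hP
  refine ⟨_, Fintype.ofFinite _, orbitSumBasis (N := φ.ker) hb, fun γ c =>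
    ⟨Quotient.mk _ (Function.surjInv hφ γ • c.out), Subtype.ext ?_⟩⟩
  change Function.surjInv hφ γ • (orbitSumBasis hb c : P.carrier) = orbitSumBasis hb _
  rw [coe_orbitSumBasis, coe_orbitSumBasis]
  exact smul_orbitSumMap_single hb _ c

theorem IsPermutation.isAddTorsionFree {G : Type} [Group G] {P : GammaMod G}
    (hP : IsPermutation P) : IsAddTorsionFree P.carrier := by
  obtain ⟨ι, _, b, -⟩ := hP
  have := Module.Free.of_basis b
  exact Module.isTorsionFree_int_iff_isAddTorsionFree.mp inferInstance

theorem IsShortExact.exists_mem_fixedSubmodule_map_eq {G : Type} [Group G] [Finite G]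
    {N : Subgroup G} {A B C : GammaMod G} [IsAddTorsionFree B.carrier]
    (hA : ∀ n ∈ N, ∀ a : A.carrier, n • a = a) {f : A.carrier →+ B.carrier}
    {g : B.carrier →+ C.carrier} (hf : IsEquivariant f) (hg : IsEquivariant g)
    (hfg : IsShortExact f g) {y : C.carrier} (hy : y ∈ fixedSubmodule N C.carrier) :
    ∃ x ∈ fixedSubmodule N B.carrier, g x = y := by
  obtain ⟨-, hg_surj, hexact⟩ := hfg
  obtain ⟨x, rfl⟩ := hg_surj y
  refine ⟨x, mem_fixedSubmodule.mpr fun n hn => ?_, rfl⟩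
  obtain ⟨a, ha⟩ : n • x - x ∈ Set.range f := by
    rw [← hexact, map_sub, hg, mem_fixedSubmodule.mp hy n hn, sub_self]
  refine smul_eq_self_of_smul_sub_fixed (isOfFinOrder_of_finite n) ?_
  rw [← ha, ← hf, hA n hn]

theorem quasiPermutation_of_quasiPermutation_pullback_general
    (Γ₁ Γ : Type) [Group Γ₁] [Group Γ] [Finite Γ₁]
    (φ : Γ₁ →* Γ) (hφ : Function.Surjective φ)
    (L : Type) [AddCommGroup L] [DistribMulAction Γ L]
    (h : IsQuasiPermutation (Γ := Γ₁)
      (@GammaMod.mk Γ₁ _ L _ (DistribMulAction.compHom L φ))) :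
    IsQuasiPermutation (Γ := Γ) ⟨L⟩ := by
  obtain ⟨P, P', hP, hP', f, g, hf, hg, hfg⟩ := h
  have hL : ∀ n ∈ φ.ker, ∀ x : L, φ n • x = x := fun n hn x => by
    rw [MonoidHom.mem_ker.mp hn, one_smul]
  have hf_mem : ∀ x, f x ∈ fixedSubmodule φ.ker P.carrier := fun x =>
    mem_fixedSubmodule.mpr fun n hn => by rw [← hf]; exact congrArg f (hL n hn x)
  have hg_mem : ∀ y : fixedSubmodule φ.ker P.carrier, g y ∈ fixedSubmodule φ.ker P'.carrier :=
    fun y => mem_fixedSubmodule.mpr fun n hn => by rw [← hg, mem_fixedSubmodule.mp y.2 n hn]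
  have := hP.isAddTorsionFree
  refine ⟨kerInvariants φ hφ P, kerInvariants φ hφ P', hP.kerInvariants hφ,
    hP'.kerInvariants hφ, f.codRestrict _ hf_mem, (g.domRestrict _).codRestrict _ hg_mem,
    fun γ x => Subtype.ext ?_, fun γ y => Subtype.ext ?_,
    fun x y hxy => hfg.1 (congrArg Subtype.val hxy), fun y => ?_, fun y => ?_⟩
  · change f (γ • x) = Function.surjInv hφ γ • f x
    conv_lhs => rw [← Function.surjInv_eq hφ γ]
    exact hf _ x
  · exact hg _ _
  · obtain ⟨x, hx, hxy⟩ := hfg.exists_mem_fixedSubmodule_map_eq hL hf hg y.2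
    exact ⟨⟨x, hx⟩, Subtype.ext hxy⟩
  · exact Subtype.ext_iff.trans <| (hfg.2.2 _).trans <|
      exists_congr fun _ => ⟨fun h => Subtype.ext h, congrArg Subtype.val⟩

/-- If `φ : Γ₁ → Γ` is a surjective homomorphism of finite groups and
`L` is a `Γ`-lattice which is quasi-permutation as a `Γ₁`-lattice (via `φ`), then `L` is
quasi-permutation as a `Γ`-lattice. -/
theorem quasiPermutation_of_quasiPermutation_pullback
    (Γ₁ Γ : Type) [Group Γ₁] [Group Γ] [Finite Γ₁] [Finite Γ]
    (φ : Γ₁ →* Γ) (hφ : Function.Surjective φ)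
    (L : Type) [AddCommGroup L] [DistribMulAction Γ L]
    [Module.Free ℤ L] [Module.Finite ℤ L]
    (h : IsQuasiPermutation (Γ := Γ₁)
      (@GammaMod.mk Γ₁ _ L _ (DistribMulAction.compHom L φ))) :
    IsQuasiPermutation (Γ := Γ) ⟨L⟩ :=
  quasiPermutation_of_quasiPermutation_pullback_general Γ₁ Γ φ hφ L h
end

section
/- Let Γ be a finite group and J_Γ = Z[Γ]/Z the cokernel of the norm map N: Z → Z[Γ] sending 1 to the sum of all group elements. Then for every subgroup Γ' ⊆ Γ, the Tate–Shafarevich group Ш²(Γ', J_Γ) := ker[H²(Γ', J_Γ) → ∏_C H²(C, J_Γ)], the product over all cyclic subgroups C of Γ', is isomorphic to H³(Γ', Z). -/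
/-!
As `Γ'`-modules, `0 → ℤ → ℤ[Γ] → J_Γ → 0` is exact and `ℤ[Γ]` is coinduced from `Γ'` (a choice of
right coset representatives gives a contracting homotopy), so `H^i(Γ', ℤ[Γ]) = 0` for `i ≥ 1` and
the connecting map `H²(Γ', J_Γ) → H³(Γ', ℤ)` is an isomorphism. On cochains it lifts a
`J_Γ`-valued 2-cocycle to `ℤ[Γ]` and takes the coboundary, which is a constant function. Thus
`H²(Γ', J_Γ)` and `H³(Γ', ℤ)` are quotients of the group of lifted cocycles by the same subgroup.
The same holds for every cyclic `C ≤ Γ'`, where `H³(C, ℤ) = 0`: averaging over `C` kills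
`H³(C, ℚ)`, so `H³(C, ℤ) ≅ H²(C, ℚ/ℤ)`, which vanishes because `ℚ/ℤ` is divisible. Hence every
class in `H²(Γ', J_Γ)` is locally trivial and `Ш²(Γ', J_Γ) = H²(Γ', J_Γ)`.
-/

@[simp] lemma shiftHom_apply {Γ : Type} [Group Γ] (γ : Γ) (x : Γ → ℤ) (δ : Γ) :
    shiftHom γ x δ = x (γ⁻¹ * δ) := rfl

@[simp] lemma trivAct_smul {G M : Type} [Group G] [AddCommGroup M] (g : G) (x : TrivAct G M) :
    g • x = x := rfl

namespace JLat

variable {Γ : Type}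

def mk : (Γ → ℤ) →+ JLat Γ := QuotientAddGroup.mk' (normSub Γ)

lemma mk_surjective : Function.Surjective (mk : (Γ → ℤ) →+ JLat Γ) :=
  QuotientAddGroup.mk'_surjective _

lemma mk_eq_zero_iff {x : Γ → ℤ} : mk x = 0 ↔ ∃ n : ℤ, x = fun _ => n := by
  rw [mk, QuotientAddGroup.mk'_apply, QuotientAddGroup.eq_zero_iff, normSub,
    AddSubgroup.mem_zmultiples_iff]
  constructor <;> rintro ⟨n, rfl⟩ <;> exact ⟨n, by funext; simp⟩

@[simp] lemma mk_const (n : ℤ) : mk (fun _ : Γ => n) = 0 :=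
  mk_eq_zero_iff.mpr ⟨n, rfl⟩

lemma smul_mk [Group Γ] (γ : Γ) (x : Γ → ℤ) : γ • mk x = mk (shiftHom γ x) := rfl

end JLat

namespace IntGroupRing

variable {Γ G : Type} [Group Γ] [Group G]

section Shapiro

variable {φ : G →* Γ} (hφ : Function.Injective φ)

noncomputable def rightCosetRep (H : Subgroup Γ) (γ : Γ) : Γ :=
  (Quotient.mk (QuotientGroup.rightRel H) γ).out

lemma mul_inv_rightCosetRep_mem (H : Subgroup Γ) (γ : Γ) : γ * (rightCosetRep H γ)⁻¹ ∈ H :=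
  QuotientGroup.rightRel_apply.mp (Quotient.mk_out (s := QuotientGroup.rightRel H) γ)

lemma rightCosetRep_mul_left {H : Subgroup Γ} {h : Γ} (hh : h ∈ H) (γ : Γ) :
    rightCosetRep H (h * γ) = rightCosetRep H γ := by
  unfold rightCosetRep
  congr 1
  exact Quotient.sound (QuotientGroup.rightRel_apply.mpr (by simpa using H.inv_mem hh))

/-- The coordinate `g` in the decomposition `γ = φ g * rightCosetRep φ.range γ`. -/
noncomputable def cosetCoord (γ : Γ) : G :=
  (MonoidHom.ofInjective hφ).symm ⟨_, mul_inv_rightCosetRep_mem φ.range γ⟩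

lemma map_cosetCoord_mul (γ : Γ) : φ (cosetCoord hφ γ) * rightCosetRep φ.range γ = γ := by
  rw [cosetCoord, MonoidHom.apply_ofInjective_symm, inv_mul_cancel_right]

lemma cosetCoord_map_mul (g : G) (γ : Γ) :
    cosetCoord hφ (φ g * γ) = g * cosetCoord hφ γ := by
  apply hφ
  have h := map_cosetCoord_mul hφ (φ g * γ)
  rw [rightCosetRep_mul_left (MonoidHom.mem_range.mpr ⟨g, rfl⟩)] at h
  rw [map_mul, ← mul_left_inj (rightCosetRep φ.range γ), h, mul_assoc, map_cosetCoord_mul]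

/-- The contracting homotopy exhibiting `ℤ[Γ]` as a coinduced `G`-module. -/
noncomputable def cosetTransfer : (G → Γ → ℤ) →+ (Γ → ℤ) where
  toFun X γ := X (cosetCoord hφ γ)⁻¹ (rightCosetRep φ.range γ)
  map_zero' := rfl
  map_add' _ _ := rfl

lemma shiftHom_cosetTransfer (X : G → Γ → ℤ) (g : G) :
    shiftHom (φ g) (cosetTransfer hφ X) = cosetTransfer hφ (fun a => X (a * g)) := by
  funext γ
  simp only [cosetTransfer, AddMonoidHom.coe_mk, ZeroHom.coe_mk, shiftHom_apply]
  rw [← map_inv, cosetCoord_map_mul, rightCosetRep_mul_left (MonoidHom.mem_range.mpr ⟨g⁻¹, rfl⟩),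
    mul_inv_rev, inv_inv]

lemma cosetTransfer_shiftHom (y : Γ → ℤ) :
    cosetTransfer hφ (fun a => shiftHom (φ a) y) = y := by
  funext γ
  simp only [cosetTransfer, AddMonoidHom.coe_mk, ZeroHom.coe_mk, shiftHom_apply, map_inv, inv_inv,
    map_cosetCoord_mul]

end Shapiro

section Differentials

variable (φ : G →* Γ)

def d₁₂ : (G → Γ → ℤ) →+ (G → G → Γ → ℤ) where
  toFun Ψ g h := shiftHom (φ g) (Ψ h) + Ψ g - Ψ (g * h)
  map_zero' := by funext; simp
  map_add' _ _ := by funext g h; simp only [Pi.add_apply, map_add]; abel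

def d₂₃ : (G → G → Γ → ℤ) →+ (G → G → G → Γ → ℤ) where
  toFun F g h k := shiftHom (φ g) (F h k) - F (g * h) k + F g (h * k) - F g h
  map_zero' := by funext; simp
  map_add' _ _ := by funext g h k; simp only [Pi.add_apply, map_add]; abel

def d₃₄ : (G → G → G → Γ → ℤ) →+ (G → G → G → G → Γ → ℤ) where
  toFun F g h k l :=
    shiftHom (φ g) (F h k l) - F (g * h) k l + F g (h * k) l - F g h (k * l) + F g h k
  map_zero' := by funext; simp
  map_add' _ _ := by funext g h k l; simp only [Pi.add_apply, map_add]; abel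

lemma d₂₃_d₁₂ (Ψ : G → Γ → ℤ) : d₂₃ φ (d₁₂ φ Ψ) = 0 := by
  funext g h k γ
  simp only [d₁₂, d₂₃, AddMonoidHom.coe_mk, ZeroHom.coe_mk, Pi.add_apply, Pi.sub_apply,
    shiftHom_apply, map_mul, mul_inv_rev, mul_assoc, Pi.zero_apply]
  ring

lemma d₃₄_d₂₃ (F : G → G → Γ → ℤ) : d₃₄ φ (d₂₃ φ F) = 0 := by
  funext g h k l γ
  simp only [d₂₃, d₃₄, AddMonoidHom.coe_mk, ZeroHom.coe_mk, Pi.add_apply, Pi.sub_apply,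
    shiftHom_apply, map_mul, mul_inv_rev, mul_assoc, Pi.zero_apply]
  ring

lemma d₂₃_const (c : G → G → ℤ) :
    d₂₃ φ (fun g h _ => c g h) = fun g h k _ => c h k - c (g * h) k + c g (h * k) - c g h :=
  rfl

lemma d₃₄_const (e : G → G → G → ℤ) :
    d₃₄ φ (fun g h k _ => e g h k) = fun g h k l _ =>
      e h k l - e (g * h) k l + e g (h * k) l - e g h (k * l) + e g h k :=
  rfl

end Differentials

section Vanishing

variable {φ : G →* Γ} (hφ : Function.Injective φ)
include hφ

theorem exists_d₁₂_eq_of_d₂₃_eq_zero {F : G → G → Γ → ℤ} (hF : d₂₃ φ F = 0) :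
    ∃ Ψ, d₁₂ φ Ψ = F := by
  refine ⟨fun g => cosetTransfer hφ (fun a => F a g), ?_⟩
  funext g h
  have hcoc : ∀ a, F (a * g) h + F a g - F a (g * h) = shiftHom (φ a) (F g h) := fun a => by
    have := congr_fun₃ hF a g h
    simp only [d₂₃, AddMonoidHom.coe_mk, ZeroHom.coe_mk, Pi.zero_apply] at this
    linear_combination -this
  show shiftHom (φ g) (cosetTransfer hφ fun a => F a h) + cosetTransfer hφ (fun a => F a g)
    - cosetTransfer hφ (fun a => F a (g * h)) = F g h
  rw [shiftHom_cosetTransfer, ← map_add, ← map_sub, ← cosetTransfer_shiftHom hφ (F g h)]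
  exact congrArg _ (funext hcoc)

theorem exists_d₂₃_eq_of_d₃₄_eq_zero {F : G → G → G → Γ → ℤ} (hF : d₃₄ φ F = 0) :
    ∃ Φ, d₂₃ φ Φ = F := by
  refine ⟨fun g h => cosetTransfer hφ (fun a => F a g h), ?_⟩
  funext g h k
  have hcoc : ∀ a, F (a * g) h k - F a (g * h) k + F a g (h * k) - F a g h
      = shiftHom (φ a) (F g h k) := fun a => by
    have := congrFun (congr_fun₃ hF a g h) k
    simp only [d₃₄, AddMonoidHom.coe_mk, ZeroHom.coe_mk, Pi.zero_apply] at this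
    linear_combination -this
  show shiftHom (φ g) (cosetTransfer hφ fun a => F a h k)
    - cosetTransfer hφ (fun a => F a (g * h) k) + cosetTransfer hφ (fun a => F a g (h * k))
    - cosetTransfer hφ (fun a => F a g h) = F g h k
  rw [shiftHom_cosetTransfer, ← map_sub, ← map_add, ← map_sub,
    ← cosetTransfer_shiftHom hφ (F g h k)]
  exact congrArg _ (funext hcoc)

end Vanishing

section Connecting

variable (φ : G →* Γ)

/-- On a lift `F` of a `J_Γ`-valued 2-cocycle the 3-cochain `d₂₃ φ F` is constant
(`d₂₃_eq_const_connecting`); this records its value. -/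
def connecting : (G → G → Γ → ℤ) →+ (G → G → G → ℤ) where
  toFun F g h k := d₂₃ φ F g h k 1
  map_zero' := rfl
  map_add' _ _ := by
    funext g h k
    exact congr_fun (congr_fun₃ (map_add (d₂₃ φ) _ _) g h k) 1

variable {φ} [DistribMulAction G (JLat Γ)] (hsmul : ∀ (g : G) (x : JLat Γ), g • x = φ g • x)
include hsmul

lemma mk_d₁₂ (Ψ : G → Γ → ℤ) (g h : G) :
    JLat.mk (d₁₂ φ Ψ g h) = g • JLat.mk (Ψ h) + JLat.mk (Ψ g) - JLat.mk (Ψ (g * h)) := by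
  simp only [d₁₂, AddMonoidHom.coe_mk, ZeroHom.coe_mk, map_sub, map_add, hsmul, JLat.smul_mk]

lemma mk_d₂₃ (F : G → G → Γ → ℤ) (g h k : G) :
    JLat.mk (d₂₃ φ F g h k) = g • JLat.mk (F h k) - JLat.mk (F (g * h) k)
      + JLat.mk (F g (h * k)) - JLat.mk (F g h) := by
  simp only [d₂₃, AddMonoidHom.coe_mk, ZeroHom.coe_mk, map_sub, map_add, hsmul, JLat.smul_mk]

lemma isCocycle2_mk_iff {F : G → G → Γ → ℤ} :
    IsCocycle2 G (JLat Γ) (fun g h => JLat.mk (F g h)) ↔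
      ∀ g h k, JLat.mk (d₂₃ φ F g h k) = 0 := by
  refine forall₃_congr fun g h k => ?_
  beta_reduce
  rw [mk_d₂₃ hsmul, sub_add_eq_add_sub, sub_sub, sub_eq_zero]

variable {F : G → G → Γ → ℤ} (hF : IsCocycle2 G (JLat Γ) (fun g h => JLat.mk (F g h)))
include hF

lemma d₂₃_eq_const_connecting : d₂₃ φ F = fun g h k _ => connecting φ F g h k := by
  funext g h k
  obtain ⟨n, hn⟩ := JLat.mk_eq_zero_iff.mp ((isCocycle2_mk_iff hsmul).mp hF g h k)
  show d₂₃ φ F g h k = fun _ => d₂₃ φ F g h k 1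
  rw [hn]

lemma isCocycle3_connecting : IsCocycle3 G (TrivAct G ℤ) (connecting φ F) := by
  intro g h k l
  have h0 := congr_fun (congr_fun₃ (congr_fun (d₃₄_d₂₃ φ F) g) h k l) 1
  rw [d₂₃_eq_const_connecting hsmul hF, d₃₄_const] at h0
  simp only [Pi.zero_apply] at h0
  show connecting φ F h k l + connecting φ F g (h * k) l + connecting φ F g h k
    = connecting φ F (g * h) k l + connecting φ F g h (k * l)
  linear_combination h0

theorem isCoboundary2_mk_iff (hφ : Function.Injective φ) :
    IsCoboundary2 G (JLat Γ) (fun g h => JLat.mk (F g h)) ↔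
      IsCoboundary3 G (TrivAct G ℤ) (connecting φ F) := by
  constructor
  · rintro ⟨ψ, hψ⟩
    choose Ψ hΨ using fun g => JLat.mk_surjective (ψ g)
    have hlift : ∀ g h, ∃ n : ℤ, F g h - d₁₂ φ Ψ g h = fun _ => n := fun g h =>
      JLat.mk_eq_zero_iff.mp (by rw [map_sub, mk_d₁₂ hsmul, hΨ, hΨ, hΨ, ← hψ, sub_self])
    choose c hc using hlift
    have hFc : F = d₁₂ φ Ψ + fun g h _ => c g h := by
      funext g h
      rw [Pi.add_apply, Pi.add_apply, ← hc g h, add_sub_cancel]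
    refine ⟨c, fun g h k => ?_⟩
    show d₂₃ φ F g h k 1 = c h k - c (g * h) k + c g (h * k) - c g h
    rw [hFc, map_add, d₂₃_d₁₂, zero_add, d₂₃_const]
  · intro h
    obtain ⟨c, hc⟩ : ∃ c : G → G → ℤ, ∀ g h k,
        connecting φ F g h k = c h k - c (g * h) k + c g (h * k) - c g h := h
    have hcocycle : d₂₃ φ (F - fun g h _ => c g h) = 0 := by
      rw [map_sub, d₂₃_eq_const_connecting hsmul hF, d₂₃_const, sub_eq_zero]
      funext g h k _
      exact hc g h k
    obtain ⟨Ψ, hΨ⟩ := exists_d₁₂_eq_of_d₂₃_eq_zero hφ hcocycle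
    refine ⟨fun g => JLat.mk (Ψ g), fun g h => ?_⟩
    rw [← mk_d₁₂ hsmul, hΨ, Pi.sub_apply, Pi.sub_apply, map_sub, JLat.mk_const, sub_zero]

end Connecting

end IntGroupRing

section TrivialCoefficients

variable {G : Type} [Group G] [Finite G]

theorem exists_eq_coboundary3_of_module_rat {M : Type} [AddCommGroup M] [Module ℚ M]
    (e : G → G → G → M)
    (he : ∀ g h k l, e h k l + e g (h * k) l + e g h k = e (g * h) k l + e g h (k * l)) :
    ∃ c : G → G → M, ∀ g h k, e g h k = c h k - c (g * h) k + c g (h * k) - c g h := by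
  have := Fintype.ofFinite G
  let S : G → G → M := fun g h => ∑ l, e g h l
  have hS : ∀ g h k,
      (Fintype.card G : ℚ) • e g h k = S (g * h) k + S g h - S h k - S g (h * k) := by
    intro g h k
    have hsum := Finset.sum_congr rfl fun l (_ : l ∈ Finset.univ) => he g h k l
    have hshift : ∑ l, e g h (k * l) = S g h :=
      Fintype.sum_equiv (Equiv.mulLeft k) _ _ fun _ => rfl
    simp only [Finset.sum_add_distrib, Finset.sum_const, Finset.card_univ, hshift] at hsum
    rw [Nat.cast_smul_eq_nsmul]
    linear_combination (norm := abel) hsum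
  have hn : (Fintype.card G : ℚ) ≠ 0 := Nat.cast_ne_zero.mpr Fintype.card_ne_zero
  refine ⟨fun g h => -((Fintype.card G : ℚ)⁻¹ • S g h), fun g h k => ?_⟩
  rw [← inv_smul_smul₀ hn (e g h k), hS]
  module

theorem exists_eq_coboundary2_of_isCyclic [IsCyclic G] {A : Type} [AddCommGroup A]
    [DivisibleBy A ℕ] (ψ : G → G → A)
    (hψ : ∀ g h k, ψ h k + ψ g (h * k) = ψ (g * h) k + ψ g h) :
    ∃ χ : G → A, ∀ g h, ψ g h = χ h + χ g - χ (g * h) := by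
  obtain ⟨τ, hτ⟩ := IsCyclic.exists_generator (α := G)
  choose ex hex using fun x : G =>
    (Submonoid.mem_powers_iff _ _).mp (mem_powers_iff_mem_zpowers.mpr (hτ x))
  let s : ℕ → A := fun i => ∑ j ∈ Finset.range i, ψ (τ ^ j) τ
  have hs_succ : ∀ i, s (i + 1) = s i + ψ (τ ^ i) τ := fun i => Finset.sum_range_succ _ i
  have hψ_one : ∀ g, ψ g 1 = ψ 1 1 := fun g => (by simpa using hψ g 1 1 : ψ 1 1 = ψ g 1).symm
  have hψ_pow : ∀ i j, ψ (τ ^ i) (τ ^ j) = s (i + j) - s i - s j + ψ 1 1 := by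
    intro i j
    induction j with
    | zero => simp [s, hψ_one]
    | succ j ih =>
      have h := hψ (τ ^ i) (τ ^ j) τ
      rw [← pow_succ, ← pow_add] at h
      rw [← add_assoc, hs_succ, hs_succ]
      linear_combination (norm := abel) h + ih
  have hs_add_orderOf : ∀ i, s (orderOf τ + i) = s (orderOf τ) + s i := fun i => by
    simp only [s, Finset.sum_range_add, pow_add, pow_orderOf_eq_one, one_mul]
  -- `s` is additive over a period only up to the drift `s (orderOf τ)`, which divisibility
  -- spreads evenly over the period.
  obtain ⟨b, hb⟩ : ∃ b : A, orderOf τ • b = s (orderOf τ) :=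
    DivisibleBy.surjective_smul A ℕ (orderOf_pos τ).ne' _
  let t : ℕ → A := fun i => s i - i • b
  have ht : Function.Periodic t (orderOf τ) := fun i => by
    simp only [t]
    rw [add_comm i, hs_add_orderOf, add_nsmul, hb]
    abel
  have ht_eq : ∀ i j, τ ^ i = τ ^ j → t i = t j := fun i j h => by
    rw [← ht.map_mod_nat i, ← ht.map_mod_nat j, pow_eq_pow_iff_modEq.mp h]
  refine ⟨fun x => ψ 1 1 - t (ex x), fun g h => ?_⟩
  have hgh : t (ex (g * h)) = t (ex g + ex h) := ht_eq _ _ (by rw [pow_add, hex, hex, hex])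
  calc ψ g h = ψ (τ ^ ex g) (τ ^ ex h) := by rw [hex, hex]
    _ = s (ex g + ex h) - s (ex g) - s (ex h) + ψ 1 1 := hψ_pow _ _
    _ = ψ 1 1 - t (ex h) + (ψ 1 1 - t (ex g)) - (ψ 1 1 - t (ex (g * h))) := by
      rw [hgh]
      simp only [t, add_nsmul]
      abel

theorem isCoboundary3_of_isCyclic [IsCyclic G] {e : G → G → G → ℤ}
    (he : IsCocycle3 G (TrivAct G ℤ) e) : IsCoboundary3 G (TrivAct G ℤ) e := by
  have he_rat : ∀ g h k l, (e h k l : ℚ) + e g (h * k) l + e g h k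
      = e (g * h) k l + e g h (k * l) := fun g h k l => by
    exact_mod_cast (he g h k l : e h k l + e g (h * k) l + e g h k = e (g * h) k l + e g h (k * l))
  obtain ⟨q, hq⟩ := exists_eq_coboundary3_of_module_rat (fun g h k => (e g h k : ℚ)) he_rat
  let π : ℚ →+ ℚ ⧸ AddSubgroup.zmultiples (1 : ℚ) := QuotientAddGroup.mk' _
  have hπ : ∀ m : ℤ, π m = 0 := fun m => (QuotientAddGroup.eq_zero_iff _).mpr ⟨m, by simp⟩
  have : DivisibleBy ℚ ℕ := AddGroup.divisibleByNatOfDivisibleByInt ℚ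
  obtain ⟨χ, hχ⟩ := exists_eq_coboundary2_of_isCyclic (fun g h => π (q g h)) fun g h k => by
    have h := congrArg π (hq g h k)
    simp only [hπ, map_add, map_sub] at h
    linear_combination (norm := abel) -h
  choose χ' hχ' using fun g => QuotientAddGroup.mk'_surjective _ (χ g)
  have hint : ∀ g h, ∃ m : ℤ, (m : ℚ) = q g h - (χ' h + χ' g - χ' (g * h)) := fun g h => by
    have h0 : π (q g h - (χ' h + χ' g - χ' (g * h))) = 0 := by
      simp only [map_sub, map_add, π, hχ', ← hχ, sub_self]
    obtain ⟨m, hm⟩ := AddSubgroup.mem_zmultiples_iff.mp ((QuotientAddGroup.eq_zero_iff _).mp h0)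
    exact ⟨m, by simpa using hm⟩
  choose c hc using hint
  refine ⟨c, fun g h k => ?_⟩
  have h : (e g h k : ℚ) = c h k - c (g * h) k + c g (h * k) - c g h := by
    rw [hq, hc, hc, hc, hc, mul_assoc]
    ring
  exact_mod_cast h

end TrivialCoefficients

section Assembly

open IntGroupRing

variable {Γ : Type} [Group Γ]

def liftedCocycles (H : Subgroup Γ) : AddSubgroup (H → H → Γ → ℤ) :=
  (cocycles2 H (JLat Γ)).comap ((JLat.mk.compLeft H).compLeft H)

namespace liftedCocycles

variable {H : Subgroup Γ}

lemma mk_mem_shaCocycles [Finite Γ] {F : H → H → Γ → ℤ} (hF : F ∈ liftedCocycles H) :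
    (fun g h => JLat.mk (F g h)) ∈ shaCocycles H (JLat Γ) := by
  refine ⟨hF, fun C hC => ?_⟩
  have hFC : IsCocycle2 C (JLat Γ) (fun a b => JLat.mk (F a b)) := fun a b c => hF a b c
  exact (isCoboundary2_mk_iff (φ := H.subtype.comp C.subtype) (fun _ _ => rfl) hFC
    (H.subtype_injective.comp C.subtype_injective)).mpr
    (isCoboundary3_of_isCyclic (isCocycle3_connecting (fun _ _ => rfl) hFC))

variable (H)

def toSha2 [Finite Γ] : liftedCocycles H →+ Sha2 H (JLat Γ) :=
  (QuotientAddGroup.mk' _).comp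
    ((((JLat.mk.compLeft H).compLeft H).comp (liftedCocycles H).subtype).codRestrict _
      fun F => mk_mem_shaCocycles F.2)

def toH3 : liftedCocycles H →+ H3 H (TrivAct H ℤ) :=
  (QuotientAddGroup.mk' _).comp
    { toFun F := ⟨connecting H.subtype F.1, isCocycle3_connecting (fun _ _ => rfl) F.2⟩
      map_zero' := Subtype.ext (map_zero (connecting H.subtype))
      map_add' F F' := Subtype.ext (map_add (connecting H.subtype) F.1 F'.1) }

variable {H}

theorem toSha2_surjective [Finite Γ] : Function.Surjective (toSha2 H) := by
  intro x
  obtain ⟨⟨f, hf⟩, rfl⟩ := QuotientAddGroup.mk_surjective x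
  choose F hF using fun g h => JLat.mk_surjective (f g h)
  have hFf : (fun g h => JLat.mk (F g h)) = f := funext₂ hF
  refine ⟨⟨F, ?_⟩, congrArg QuotientAddGroup.mk (Subtype.ext hFf)⟩
  show IsCocycle2 H (JLat Γ) (fun g h => JLat.mk (F g h))
  exact hFf ▸ hf.1

theorem toH3_surjective : Function.Surjective (toH3 H) := by
  intro x
  obtain ⟨⟨e, he⟩, rfl⟩ := QuotientAddGroup.mk_surjective x
  have hE : d₃₄ H.subtype (fun g h k _ => e g h k) = 0 := by
    funext g h k l _
    show e h k l - e (g * h) k l + e g (h * k) l - e g h (k * l) + e g h k = 0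
    have h := he g h k l
    rw [trivAct_smul] at h
    linear_combination (norm := abel) h
  obtain ⟨Φ, hΦ⟩ := exists_d₂₃_eq_of_d₃₄_eq_zero H.subtype_injective hE
  have hΦ_mem : Φ ∈ liftedCocycles H := (isCocycle2_mk_iff (φ := H.subtype) (fun _ _ => rfl)).mpr
    fun g h k => by rw [hΦ]; exact JLat.mk_const _
  refine ⟨⟨Φ, hΦ_mem⟩, congrArg QuotientAddGroup.mk (Subtype.ext ?_)⟩
  funext g h k
  show d₂₃ H.subtype Φ g h k 1 = e g h k
  rw [hΦ]

theorem ker_toSha2_eq_ker_toH3 [Finite Γ] : (toSha2 H).ker = (toH3 H).ker := by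
  ext ⟨F, hF⟩
  simp only [AddMonoidHom.mem_ker, toSha2, toH3, AddMonoidHom.comp_apply,
    QuotientAddGroup.mk'_apply, QuotientAddGroup.eq_zero_iff, AddSubgroup.mem_addSubgroupOf]
  exact isCoboundary2_mk_iff (fun _ _ => rfl) hF H.subtype_injective

end liftedCocycles

end Assembly

/-- For a finite group `Γ` and `J_Γ = ℤ[Γ]/ℤ` (cokernel of the norm
map), for every subgroup `Γ' ⊆ Γ` the Tate–Shafarevich group `Ш²(Γ', J_Γ)` is
isomorphic to `H³(Γ', ℤ)` (with trivial action on `ℤ`). -/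
theorem sha2_JLat_iso_H3 (Γ : Type) [Group Γ] [Fintype Γ] (Γ' : Subgroup Γ) :
    Nonempty (Sha2 Γ' (JLat Γ) ≃+ H3 Γ' (TrivAct Γ' ℤ)) :=
  ⟨(QuotientAddGroup.quotientKerEquivOfSurjective _
      (liftedCocycles.toSha2_surjective (H := Γ'))).symm.trans
    ((QuotientAddGroup.quotientAddEquivOfEq liftedCocycles.ker_toSha2_eq_ker_toH3).trans
      (QuotientAddGroup.quotientKerEquivOfSurjective _ liftedCocycles.toH3_surjective))⟩
end

section
/- If a Γ-lattice L is quasi-invertible, then Ш²(Γ', L) = 0 for every subgroup Γ' of Γ. -/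
/-!
For a permutation lattice `ℤ[ι]`, averaging over the finite group writes a 2-cocycle `c` as `dΦ`
over `ℚ`, so `Φ mod ℤ` is a 1-cocycle with values in `(ℚ/ℤ)[ι]`. By Shapiro's lemma such a cocycle
is a coboundary once it vanishes at every `(t, y)` with `t • y = y`; this holds because on the
cyclic group `⟨t⟩` the cocycle `c` also has an integral primitive, and the difference of the two
primitives is a `ℚ`-valued 1-cocycle, which vanishes at fixed points. Correcting `Φ` by a lift of
the resulting primitive makes it integral, so `Ш²(ℤ[ι]) = 0`; the same fixed-point argument gives
`H¹(ℤ[ι]) = 0`. Along `0 → Q → P → P' → 0`, a locally trivial class of `Q` dies in `P`, and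
`H¹(P') = 0` moves its primitive into `Q`; finally, `Ш²` of a direct summand embeds into `Ш²` of
the whole lattice.
-/

section CochainConditions

variable (G : Type) [Group G] (M : Type) [AddCommGroup M] [DistribMulAction G M]

def IsCocycle1 (φ : G → M) : Prop :=
  ∀ s t : G, φ (s * t) = s • φ t + φ s

def IsCoboundary1 (φ : G → M) : Prop :=
  ∃ m : M, ∀ s : G, φ s = s • m - m

def H1Vanishes : Prop :=
  ∀ φ : G → M, IsCocycle1 G M φ → IsCoboundary1 G M φ

def IsLocallyCoboundary2 (c : G → G → M) : Prop :=
  ∀ C : Subgroup G, IsCyclic C → IsCoboundary2 C M fun a b : C => c a b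

def Sha2Vanishes : Prop :=
  ∀ c : G → G → M, IsCocycle2 G M c → IsLocallyCoboundary2 G M c → IsCoboundary2 G M c

end CochainConditions

section Functoriality

variable {G M N : Type} [Group G] [AddCommGroup M] [DistribMulAction G M]
  [AddCommGroup N] [DistribMulAction G N]

theorem Sha2Vanishes.eq_zero (h : Sha2Vanishes G M) (x : Sha2 G M) : x = 0 := by
  induction x using QuotientAddGroup.induction_on with
  | H c =>
    rw [QuotientAddGroup.eq_zero_iff, AddSubgroup.mem_addSubgroupOf]
    exact h c c.2.1 c.2.2

def DistribMulActionHom.restrictSubgroup (H : Subgroup G) (f : M →+[G] N) : M →+[H] N :=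
  { f.toAddMonoidHom with map_smul' := fun a => f.map_smul (a : G) }

theorem IsCocycle1.map (f : M →+[G] N) {φ : G → M} (hφ : IsCocycle1 G M φ) :
    IsCocycle1 G N (f ∘ φ) := fun s t => by
  simp [hφ s t]

theorem IsCoboundary1.map (f : M →+[G] N) {φ : G → M} (hφ : IsCoboundary1 G M φ) :
    IsCoboundary1 G N (f ∘ φ) := by
  obtain ⟨m, hm⟩ := hφ
  exact ⟨f m, fun s => by simp [hm s]⟩

theorem IsCocycle2.map (f : M →+[G] N) {c : G → G → M} (hc : IsCocycle2 G M c) :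
    IsCocycle2 G N fun g h => f (c g h) := fun g h k => by
  simp only [← map_smul, ← map_add, hc g h k]

theorem IsCoboundary2.map (f : M →+[G] N) {c : G → G → M} (hc : IsCoboundary2 G M c) :
    IsCoboundary2 G N fun g h => f (c g h) := by
  obtain ⟨φ, hφ⟩ := hc
  exact ⟨f ∘ φ, fun g h => by simp [hφ g h]⟩

theorem IsLocallyCoboundary2.map (f : M →+[G] N) {c : G → G → M}
    (hc : IsLocallyCoboundary2 G M c) : IsLocallyCoboundary2 G N fun g h => f (c g h) :=
  fun C hC => (hc C hC).map (f.restrictSubgroup C)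

theorem IsCoboundary2.of_injective {f : M →+[G] N} (hf : Function.Injective f) {c : G → G → M}
    {θ : G → M} (hθ : ∀ g h, f (c g h) = g • f (θ h) + f (θ g) - f (θ (g * h))) :
    IsCoboundary2 G M c :=
  ⟨θ, fun g h => hf (by simp [hθ])⟩

theorem isCocycle1_comp_of_comp_eq_zero (f : M →+[G] N) {c : G → G → M} {φ : G → M}
    (hφ : ∀ g h, c g h = g • φ h + φ g - φ (g * h)) (hc : ∀ g h, f (c g h) = 0) :
    IsCocycle1 G N (f ∘ φ) := fun s t => by
  have := hc s t
  rw [hφ, map_sub, map_add, map_smul, sub_eq_zero] at this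
  exact this.symm

theorem isCocycle1_sub_of_coboundary_eq {c : G → G → M} {φ ψ : G → M}
    (hφ : ∀ g h, c g h = g • φ h + φ g - φ (g * h))
    (hψ : ∀ g h, c g h = g • ψ h + ψ g - ψ (g * h)) : IsCocycle1 G M (φ - ψ) := fun s t => by
  have := sub_eq_zero.2 ((hφ s t).symm.trans (hψ s t))
  simp only [Pi.sub_apply, smul_sub]
  rw [← sub_eq_zero, ← neg_eq_zero, ← this]
  abel

theorem H1Vanishes.of_retract (i : M →+[G] N) (r : N →+[G] M) (hri : ∀ x, r (i x) = x)
    (hN : H1Vanishes G N) : H1Vanishes G M := fun φ hφ => by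
  simpa [Function.comp_def, hri] using (hN _ (hφ.map i)).map r

theorem Sha2Vanishes.of_retract (i : M →+[G] N) (r : N →+[G] M) (hri : ∀ x, r (i x) = x)
    (hN : Sha2Vanishes G N) : Sha2Vanishes G M := fun c hc hloc => by
  simpa [hri] using (hN _ (hc.map i) (hloc.map i)).map r

theorem Sha2Vanishes.of_shortExact {P : Type} [AddCommGroup P] [DistribMulAction G P]
    (j : M →+[G] N) (g : N →+[G] P) (hj : Function.Injective j) (hg : Function.Surjective g)
    (hexact : ∀ y, g y = 0 ↔ y ∈ Set.range j) (hN : Sha2Vanishes G N) (hP : H1Vanishes G P) :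
    Sha2Vanishes G M := fun c hc hloc => by
  obtain ⟨φ, hφ⟩ := hN _ (hc.map j) (hloc.map j)
  obtain ⟨p', hp'⟩ :=
    hP _ (isCocycle1_comp_of_comp_eq_zero g hφ fun s t => (hexact _).2 ⟨_, rfl⟩)
  obtain ⟨p, rfl⟩ := hg p'
  have hker : ∀ s, φ s - (s • p - p) ∈ Set.range j := fun s =>
    (hexact _).1 (by rw [map_sub, map_sub, map_smul]; exact sub_eq_zero.2 (hp' s))
  choose q hq using hker
  refine IsCoboundary2.of_injective hj (θ := q) fun s t => ?_
  simp only [hq, hφ, smul_sub, mul_smul]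
  abel

end Functoriality

section Averaging

variable {G M : Type} [Group G] [Fintype G] [AddCommGroup M] [DistribMulAction G M]

theorem IsCocycle1.card_nsmul_eq {φ : G → M} (hφ : IsCocycle1 G M φ) (s : G) :
    Fintype.card G • φ s = ∑ t, φ t - s • ∑ t, φ t := by
  have hsum : ∑ t, φ (s * t) = ∑ t, φ t := Equiv.sum_comp (Equiv.mulLeft s) φ
  simp only [hφ s, Finset.sum_add_distrib, Finset.sum_const, Finset.card_univ,
    ← Finset.smul_sum] at hsum
  rw [eq_sub_iff_add_eq, add_comm, hsum]

theorem IsCocycle2.card_nsmul_eq {c : G → G → M} (hc : IsCocycle2 G M c) (g h : G) :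
    Fintype.card G • c g h = g • ∑ k, c h k + ∑ k, c g k - ∑ k, c (g * h) k := by
  have hsum := Finset.sum_congr rfl fun k (_ : k ∈ Finset.univ) => hc g h k
  have hre : ∑ k, c g (h * k) = ∑ k, c g k := Equiv.sum_comp (Equiv.mulLeft h) (c g)
  simp only [Finset.sum_add_distrib, Finset.sum_const, Finset.card_univ, ← Finset.smul_sum,
    hre] at hsum
  rw [hsum]
  abel

theorem IsCocycle2.isCoboundary2_of_module_rat [Module ℚ M] {c : G → G → M}
    (hc : IsCocycle2 G M c) : IsCoboundary2 G M c := by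
  refine ⟨fun g => (Fintype.card G : ℚ)⁻¹ • ∑ k, c g k, fun g h => ?_⟩
  have hcomm : ∀ (q : ℚ) (x : M), g • q • x = q • g • x :=
    map_rat_smul (DistribSMul.toAddMonoidHom M g)
  rw [hcomm, ← smul_add, ← smul_sub, ← hc.card_nsmul_eq, ← Nat.cast_smul_eq_nsmul ℚ,
    inv_smul_smul₀ (by simp)]

end Averaging

section PermutationModule

variable {G ι A B : Type} [Group G] [MulAction G ι] [AddCommGroup A] [AddCommGroup B]

-- The permutation module `A[ι]`.
abbrev arrowDistribMulAction : DistribMulAction G (ι → A) :=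
  { arrowAction with smul_zero _ := rfl, smul_add _ _ _ := rfl }

attribute [local instance] arrowDistribMulAction

theorem arrow_smul_apply (g : G) (f : ι → A) (x : ι) : (g • f) x = f (g⁻¹ • x) := rfl

def AddMonoidHom.compLeftArrow (f : A →+ B) : (ι → A) →+[G] (ι → B) :=
  { f.compLeft ι with map_smul' := fun _ _ => rfl }

theorem IsCocycle1.apply_eq_zero_of_smul_eq [Finite G] [IsAddTorsionFree A] {φ : G → ι → A}
    (hφ : IsCocycle1 G (ι → A) φ) {t : G} {y : ι} (hty : t • y = y) : φ t y = 0 := by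
  have := Fintype.ofFinite G
  have h := congrFun (hφ.card_nsmul_eq t) y
  rw [Pi.sub_apply, arrow_smul_apply, inv_smul_eq_iff.2 hty.symm, sub_self, Pi.smul_apply] at h
  exact (nsmul_eq_zero_iff_right Fintype.card_ne_zero).1 h

theorem IsCocycle1.isCoboundary1_of_forall_smul_eq {φ : G → ι → A}
    (hφ : IsCocycle1 G (ι → A) φ) (hstab : ∀ t y, t • y = y → φ t y = 0) :
    IsCoboundary1 G (ι → A) φ := by
  let rep : ι → ι := fun x => (Quotient.mk (MulAction.orbitRel G ι) x).out
  have hrep : ∀ (s : G) x, rep (s • x) = rep x := fun s x =>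
    congrArg Quotient.out (Quotient.sound (MulAction.mem_orbit x s))
  have hmem : ∀ x, ∃ g : G, g • rep x = x := fun x =>
    (MulAction.orbitRel G ι).symm (Quotient.mk_out x)
  choose a ha using hmem
  refine ⟨fun x => -φ (a x) x, fun s => funext fun x => ?_⟩
  set b := s * a (s⁻¹ • x)
  have hb : φ b x = φ (a (s⁻¹ • x)) (s⁻¹ • x) + φ s x := congrFun (hφ s _) x
  have hbx : b • rep x = x := by rw [mul_smul, ← hrep s⁻¹ x, ha, smul_inv_smul]
  have hax : (a x)⁻¹ • x = rep x := inv_smul_eq_iff.2 (ha x).symm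
  have hab : φ b x = φ (a x) x := by
    have h := congrFun (hφ (a x) ((a x)⁻¹ * b)) x
    rwa [mul_inv_cancel_left, Pi.add_apply, arrow_smul_apply, hax,
      hstab ((a x)⁻¹ * b) (rep x) (by rw [mul_smul, hbx, hax]), zero_add] at h
  rw [Pi.sub_apply, arrow_smul_apply, ← hab, hb]
  abel

theorem h1Vanishes_arrow [Finite G] [IsAddTorsionFree A] : H1Vanishes G (ι → A) :=
  fun _ hφ => hφ.isCoboundary1_of_forall_smul_eq fun _ _ => hφ.apply_eq_zero_of_smul_eq

theorem sha2Vanishes_arrow_int [Finite G] : Sha2Vanishes G (ι → ℤ) := by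
  intro c hc hloc
  have := Fintype.ofFinite G
  let castQ : (ι → ℤ) →+[G] (ι → ℚ) := (Int.castAddHom ℚ).compLeftArrow
  let modZ : ℚ →+ ℚ ⧸ (Int.castAddHom ℚ).range := QuotientAddGroup.mk' _
  obtain ⟨Φ, hΦ⟩ := (hc.map castQ).isCoboundary2_of_module_rat
  have hΦZ : IsCocycle1 G (ι → ℚ ⧸ (Int.castAddHom ℚ).range) (modZ.compLeftArrow ∘ Φ) :=
    isCocycle1_comp_of_comp_eq_zero _ hΦ fun g h => funext fun x =>
      (QuotientAddGroup.eq_zero_iff _).2 ⟨c g h x, rfl⟩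
  have hstab : ∀ t y, t • y = y → modZ (Φ t y) = 0 := by
    intro t y hty
    obtain ⟨R, hR⟩ := hloc (Subgroup.zpowers t) inferInstance
    have hδ : IsCocycle1 (Subgroup.zpowers t) (ι → ℚ) fun a => Φ a - castQ (R a) :=
      isCocycle1_sub_of_coboundary_eq (c := fun a b : Subgroup.zpowers t => castQ (c a b))
        (φ := fun a => Φ a) (ψ := fun a => castQ (R a)) (fun a b => hΦ a b)
        (fun a b => by rw [show c a b = _ from hR a b, map_sub, map_add]; rfl)
    have h := hδ.apply_eq_zero_of_smul_eq (t := ⟨t, Subgroup.mem_zpowers t⟩) hty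
    rw [show Φ t y = R _ y from sub_eq_zero.1 h]
    exact (QuotientAddGroup.eq_zero_iff _).2 ⟨_, rfl⟩
  obtain ⟨_, hψ⟩ := hΦZ.isCoboundary1_of_forall_smul_eq hstab
  obtain ⟨ψ, rfl⟩ := (QuotientAddGroup.mk'_surjective _).comp_left ‹ι → _›
  have hint : ∀ s x, Φ s x - ((s • ψ) x - ψ x) ∈ (Int.castAddHom ℚ).range := fun s x => by
    rw [← QuotientAddGroup.eq_zero_iff, ← QuotientAddGroup.mk'_apply, map_sub, map_sub,
      sub_eq_zero]
    exact congrFun (hψ s) x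
  choose θ hθ using hint
  have hcastθ : ∀ s, castQ (θ s) = Φ s - (s • ψ - ψ) := fun s => funext (hθ s)
  refine IsCoboundary2.of_injective (f := castQ) (θ := θ)
    (fun _ _ h => funext fun x => Int.cast_injective (congrFun h x)) fun g h => ?_
  rw [hcastθ, hcastθ, hcastθ, show castQ (c g h) = _ from hΦ g h]
  simp only [smul_sub, mul_smul]
  abel

end PermutationModule

section PermutationBasis

attribute [local instance] arrowDistribMulAction

theorem Module.Basis.exists_mulAction_smul_eq {G R M ι : Type} [Group G] [Semiring R]
    [Nontrivial R] [AddCommMonoid M] [Module R M] [MulAction G M] (b : Module.Basis ι R M)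
    (hb : ∀ (g : G) i, ∃ j, g • b i = b j) :
    ∃ _ : MulAction G ι, ∀ (g : G) i, g • b i = b (g • i) := by
  choose σ hσ using hb
  refine ⟨{ smul := σ
            one_smul := fun i => b.injective ((hσ 1 i).symm.trans (one_smul G (b i)))
            mul_smul := fun g h i => b.injective ?_ }, hσ⟩
  show b (σ (g * h) i) = b (σ g (σ h i))
  rw [← hσ, mul_smul, hσ, hσ]

theorem Module.Basis.equivFun_smul_s6 {G R M ι : Type} [Group G] [Semiring R] [AddCommMonoid M]
    [Module R M] [DistribMulAction G M] [SMulCommClass G R M] [MulAction G ι] [Fintype ι]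
    (b : Module.Basis ι R M) (hb : ∀ (g : G) i, g • b i = b (g • i)) (g : G) (m : M) :
    b.equivFun (g • m) = fun x => b.equivFun m (g⁻¹ • x) := by
  classical
  funext x
  conv_lhs => rw [← b.sum_equivFun m]
  simp only [Finset.smul_sum, smul_comm g, hb, map_sum, map_smul, Finset.sum_apply,
    Pi.smul_apply, Basis.equivFun_self, smul_eq_mul, mul_ite, mul_one, mul_zero,
    smul_eq_iff_eq_inv_smul, Finset.sum_ite_eq', Finset.mem_univ, if_true]

variable {G M ι : Type} [Group G] [AddCommGroup M] [DistribMulAction G M] [Finite ι]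

theorem Module.Basis.exists_retract_arrow (b : Module.Basis ι ℤ M)
    (hb : ∀ (g : G) i, ∃ j, g • b i = b j) :
    ∃ (_ : MulAction G ι) (e : M →+[G] (ι → ℤ)) (e' : (ι → ℤ) →+[G] M), ∀ m, e' (e m) = m := by
  obtain ⟨_, hb⟩ := b.exists_mulAction_smul_eq hb
  have := Fintype.ofFinite ι
  have he : ∀ (g : G) m, b.equivFun (g • m) = g • b.equivFun m := b.equivFun_smul_s6 hb
  refine ⟨_, { b.equivFun.toAddEquiv.toAddMonoidHom with map_smul' := he },
    { b.equivFun.symm.toAddEquiv.toAddMonoidHom with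
      map_smul' := fun g f => b.equivFun.injective ?_ }, b.equivFun.symm_apply_apply⟩
  show b.equivFun (b.equivFun.symm (g • f)) = b.equivFun (g • b.equivFun.symm f)
  rw [he, LinearEquiv.apply_symm_apply, LinearEquiv.apply_symm_apply]

theorem h1Vanishes_of_basis [Finite G] (b : Module.Basis ι ℤ M)
    (hb : ∀ (g : G) i, ∃ j, g • b i = b j) : H1Vanishes G M := by
  obtain ⟨_, e, e', he⟩ := b.exists_retract_arrow hb
  exact h1Vanishes_arrow.of_retract e e' he

theorem sha2Vanishes_of_basis [Finite G] (b : Module.Basis ι ℤ M)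
    (hb : ∀ (g : G) i, ∃ j, g • b i = b j) : Sha2Vanishes G M := by
  obtain ⟨_, e, e', he⟩ := b.exists_retract_arrow hb
  exact sha2Vanishes_arrow_int.of_retract e e' he

end PermutationBasis

def IsEquivariant.toDistribMulActionHom {Γ : Type} [Group Γ] {A B : GammaMod Γ}
    {f : A.carrier →+ B.carrier} (hf : IsEquivariant f) (H : Subgroup Γ) :
    A.carrier →+[H] B.carrier :=
  { f with map_smul' := fun a => hf a }

theorem sha2_eq_zero_of_quasiInvertible_general
    (Γ : Type) [Group Γ] [Finite Γ]
    (L : Type) [AddCommGroup L] [DistribMulAction Γ L]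
    (h : IsQuasiInvertible (Γ := Γ) ⟨L⟩) :
    ∀ (Γ' : Subgroup Γ) (x : Sha2 Γ' L), x = 0 := by
  obtain ⟨Q, ⟨P, P', ⟨ι, _, b, hb⟩, ⟨ι', _, b', hb'⟩, f, g, hf, hg, hinj, hsurj, hexact⟩,
    i, r, hi, hr, hri⟩ := h
  intro Γ'
  have hP : Sha2Vanishes Γ' P.carrier := sha2Vanishes_of_basis b fun s => hb s
  have hP' : H1Vanishes Γ' P'.carrier := h1Vanishes_of_basis b' fun s => hb' s
  have hQ : Sha2Vanishes Γ' Q.carrier :=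
    hP.of_shortExact (hf.toDistribMulActionHom Γ') (hg.toDistribMulActionHom Γ') hinj hsurj
      hexact hP'
  exact (hQ.of_retract (hi.toDistribMulActionHom Γ') (hr.toDistribMulActionHom Γ')
    (DFunLike.congr_fun hri)).eq_zero

/-- If a `Γ`-lattice `L` is quasi-invertible, then the
Tate–Shafarevich group `Ш²(Γ', L)` vanishes for every subgroup `Γ'` of `Γ`. -/
theorem sha2_eq_zero_of_quasiInvertible
    (Γ : Type) [Group Γ] [Finite Γ]
    (L : Type) [AddCommGroup L] [DistribMulAction Γ L]
    [Module.Free ℤ L] [Module.Finite ℤ L]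
    (h : IsQuasiInvertible (Γ := Γ) ⟨L⟩) :
    ∀ (Γ' : Subgroup Γ) (x : Sha2 Γ' L), x = 0 :=
  sha2_eq_zero_of_quasiInvertible_general Γ L h
end

section
/- Let F be a field and V a linear subspace of F^m of dimension d ≥ 2. Then V has a basis consisting of defective vectors, i.e., vectors having at least one zero coordinate. -/
/-!
The coordinate forms restricted to `V` span the dual `V*`, so `d` of them, `x_{s 1}, …, x_{s d}`,
form a basis of `V*`. The basis `b` of `V` dual to it satisfies `b i (s j) = δ i j`, so `b i`
vanishes at coordinate `s j` for any `j ≠ i`, which exists because `d ≥ 2`.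
-/

open Module Submodule Set

section DualBasis

variable {K V ι : Type*} [Field K] [AddCommGroup V] [Module K V] [FiniteDimensional K V]

theorem exists_basis_biorthogonal_of_span_eq_top {φ : ι → Dual K V}
    (hφ : span K (range φ) = ⊤) {d : ℕ} (hd : finrank K V = d) :
    ∃ (s : Fin d → ι) (b : Basis (Fin d) K V),
      ∀ i j, φ (s j) (b i) = if j = i then 1 else 0 := by
  let B₀ := Basis.ofSpan hφ.ge
  let B := B₀.reindex (B₀.indexEquiv (finBasisOfFinrankEq K (Dual K V)
    ((Subspace.dual_finrank_eq).trans hd)))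
  have hB : ∀ j, B j ∈ range φ := fun j =>
    Basis.ofSpan_subset hφ.ge (by rw [Basis.reindex_apply]; exact mem_range_self _)
  choose s hs using hB
  refine ⟨s, B.dualBasis.map (evalEquiv K V).symm, fun i j => ?_⟩
  rw [hs, Basis.map_apply, apply_evalEquiv_symm_apply, Basis.dualBasis_apply_self]

end DualBasis

theorem span_range_proj_comp_subtype_eq_top {K ι : Type*} [Field K]
    (W : Submodule K (ι → K)) [FiniteDimensional K W] :
    span K (range fun k : ι => (LinearMap.proj k : (ι → K) →ₗ[K] K).comp W.subtype) = ⊤ := by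
  refine span_eq_top_of_ne_zero fun w hw => ?_
  obtain ⟨k, hk⟩ := Function.ne_iff.mp (Subtype.coe_ne_coe.mpr hw)
  exact ⟨_, ⟨k, rfl⟩, hk⟩

/-- Let `F` be a field and `V ⊆ F^m` a subspace of dimension
`d ≥ 2`. Then `V` has a basis consisting of defective vectors, i.e. vectors having at
least one zero coordinate. -/
theorem exists_basis_of_defective_vectors (F : Type) [Field F] (m : ℕ)
    (V : Submodule F (Fin m → F)) (d : ℕ)
    (hd : Module.finrank F V = d) (h2 : 2 ≤ d) :
    ∃ b : Module.Basis (Fin d) F V, ∀ i : Fin d, ∃ k : Fin m, (b i : Fin m → F) k = 0 := by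
  obtain ⟨s, b, hb⟩ := exists_basis_biorthogonal_of_span_eq_top
    (span_range_proj_comp_subtype_eq_top V) hd
  have : Nontrivial (Fin d) := Fin.nontrivial_iff_two_le.mpr h2
  refine ⟨b, fun i => ?_⟩
  obtain ⟨j, hji⟩ := exists_ne i
  exact ⟨s j, by simpa [hji] using hb i j⟩
end

section
/- Let F be a field and V ⊆ F^m a subspace. Call a subspace coordinate if it is spanned by a subset of the standard basis vectors. Suppose V ∩ F_I is a coordinate subspace for every proper subset I ⊊ {1, ..., m}, where F_I is the span of {e_i : i ∈ I}. Then either V is the 1-dimensional span of a vector (a₁, ..., a_m) with all a_i ≠ 0, or V is a coordinate subspace. -/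
/-- The coordinate subspace `F_I ⊆ F^m`: vectors supported on `I`. -/
def coordSubspace (F : Type) [Field F] (m : ℕ) (I : Set (Fin m)) :
    Submodule F (Fin m → F) where
  carrier := {x | ∀ i, i ∉ I → x i = 0}
  add_mem' := by
    intro a b ha hb i hi
    simp [ha i hi, hb i hi]
  zero_mem' := fun _ _ => rfl
  smul_mem' := by
    intro c a ha i hi
    simp [ha i hi]

/-- A subspace of `F^m` is coordinate if it is spanned by a subset of the standard
basis vectors, i.e. equals `F_I` for some `I`. -/
def IsCoordinateSubspace (F : Type) [Field F] (m : ℕ)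
    (V : Submodule F (Fin m → F)) : Prop :=
  ∃ I : Set (Fin m), V = coordSubspace F m I

lemma mem_coordSubspace {F : Type} [Field F] {m : ℕ} {I : Set (Fin m)}
    {x : Fin m → F} : x ∈ coordSubspace F m I ↔ ∀ i, i ∉ I → x i = 0 :=
  Iff.rfl

lemma coordSubspace_mono {F : Type} [Field F] {m : ℕ} {I J : Set (Fin m)}
    (h : I ⊆ J) : coordSubspace F m I ≤ coordSubspace F m J :=
  fun _ hx i hi => hx i fun h' => hi (h h')

lemma single_mem_coordSubspace {F : Type} [Field F] {m : ℕ} {I : Set (Fin m)}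
    {j : Fin m} (hj : j ∈ I) (c : F) : Pi.single j c ∈ coordSubspace F m I := by
  intro i hi
  have hij : i ≠ j := fun e => hi (e ▸ hj)
  simp [Pi.single_eq_of_ne hij]

/-- Let `F` be a field and `V ⊆ F^m` a subspace such that
`V ∩ F_I` is a coordinate subspace for every proper subset `I ⊊ {1, …, m}`. Then
either `V` is the 1-dimensional span of a vector with all coordinates nonzero, or
`V` is a coordinate subspace. -/
theorem coordinate_or_span_of_inter_coordinate (F : Type) [Field F] (m : ℕ)
    (V : Submodule F (Fin m → F))
    (h : ∀ I : Set (Fin m), I ≠ Set.univ →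
      IsCoordinateSubspace F m (V ⊓ coordSubspace F m I)) :
    (∃ a : Fin m → F, (∀ i, a i ≠ 0) ∧ V = Submodule.span F {a}) ∨
      IsCoordinateSubspace F m V := by
  -- choose coordinate sets for the intersections with hyperplanes
  have hne : ∀ i : Fin m, ({i}ᶜ : Set (Fin m)) ≠ Set.univ := by
    intro i he
    have : i ∈ ({i}ᶜ : Set (Fin m)) := he ▸ Set.mem_univ i
    exact this rfl
  choose I hI using fun i : Fin m => h _ (hne i)
  set K : Set (Fin m) := ⋃ i, I i with hK
  -- each coordSubspace (I i) sits inside V and inside coordSubspace K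
  have hIV : ∀ i, coordSubspace F m (I i) ≤ V := fun i => (hI i) ▸ inf_le_left
  have hIK : ∀ i, coordSubspace F m (I i) ≤ coordSubspace F m K :=
    fun i => coordSubspace_mono (Set.subset_iUnion I i)
  -- any vector of V vanishing at some coordinate lies in coordSubspace K
  have hdef : ∀ w ∈ V, ∀ i : Fin m, w i = 0 → w ∈ coordSubspace F m K := by
    intro w hw i hwi
    refine hIK i ?_
    rw [← hI i]
    refine ⟨hw, ?_⟩
    intro j hj
    have : j = i := by
      by_contra hji
      exact hj hji
    rw [this, hwi]
  -- coordSubspace K ≤ V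
  have hKV : coordSubspace F m K ≤ V := by
    intro x hx
    have hx' : x = ∑ j, Pi.single j (x j) := (Finset.univ_sum_single x).symm
    rw [hx']
    refine Submodule.sum_mem V ?_
    intro j _
    by_cases hxj : x j = 0
    · rw [hxj, Pi.single_zero]; exact V.zero_mem
    · have hjK : j ∈ K := by
        by_contra hjK
        exact hxj (hx j hjK)
      obtain ⟨s, ⟨i, rfl⟩, hji⟩ := hjK
      exact hIV i (single_mem_coordSubspace hji (x j))
  by_cases hA : ∀ v ∈ V, ∃ i : Fin m, v i = 0
  · -- every vector of V is defective: V is coordinate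
    right
    refine ⟨K, le_antisymm ?_ hKV⟩
    intro v hv
    obtain ⟨i, hvi⟩ := hA v hv
    exact hdef v hv i hvi
  · push_neg at hA
    obtain ⟨a, ha, hanz⟩ := hA
    by_cases hB : V ≤ Submodule.span F {a}
    · left
      exact ⟨a, hanz, le_antisymm hB (Submodule.span_le.2 (by simpa using ha))⟩
    · right
      obtain ⟨v, hv, hvs⟩ := Set.not_subset.1 hB
      have hm : 0 < m := by
        rcases Nat.eq_zero_or_pos m with hm0 | hm0
        · exfalso
          apply hvs
          subst hm0
          have : v = (0 : Fin 0 → F) := funext fun i => absurd i.2 (Nat.not_lt_zero _)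
          rw [this]
          exact Submodule.zero_mem _
        · exact hm0
      set i0 : Fin m := ⟨0, hm⟩
      set c : F := v i0 / a i0 with hc
      -- there is a coordinate where v/a differs from c
      have hj : ∃ j : Fin m, v j ≠ c * a j := by
        by_contra hj
        push_neg at hj
        apply hvs
        have : v = c • a := funext fun j => by simpa using hj j
        rw [this]
        exact Submodule.smul_mem _ _ (Submodule.mem_span_singleton_self a)
      obtain ⟨j, hjne⟩ := hj
      -- a ∈ coordSubspace K
      have haK : a ∈ coordSubspace F m K := by
        set u1 : Fin m → F := v - c • a with hu1
        set d : F := v j / a j with hd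
        set u2 : Fin m → F := v - d • a with hu2
        have hu1V : u1 ∈ V := V.sub_mem hv (V.smul_mem _ ha)
        have hu2V : u2 ∈ V := V.sub_mem hv (V.smul_mem _ ha)
        have hu1K : u1 ∈ coordSubspace F m K := by
          refine hdef u1 hu1V i0 ?_
          simp [hu1, hc, div_mul_cancel₀ _ (hanz i0)]
        have hu2K : u2 ∈ coordSubspace F m K := by
          refine hdef u2 hu2V j ?_
          simp [hu2, hd, div_mul_cancel₀ _ (hanz j)]
        have hdc : d - c ≠ 0 := by
          intro hdc
          apply hjne
          have hdc' : d = c := by linear_combination hdc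
          rw [hd] at hdc'
          exact (div_eq_iff (hanz j)).mp hdc'
        have hsub : u1 - u2 = (d - c) • a := by
          rw [hu1, hu2]
          ext k
          simp [sub_smul]
          ring
        have : (d - c) • a ∈ coordSubspace F m K := hsub ▸ (coordSubspace F m K).sub_mem hu1K hu2K
        have := (coordSubspace F m K).smul_mem (d - c)⁻¹ this
        rwa [smul_smul, inv_mul_cancel₀ hdc, one_smul] at this
      refine ⟨K, le_antisymm ?_ hKV⟩
      intro w hw
      set e : F := w i0 / a i0 with he
      have h1 : w - e • a ∈ coordSubspace F m K := by
        refine hdef _ (V.sub_mem hw (V.smul_mem _ ha)) i0 ?_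
        simp [he, div_mul_cancel₀ _ (hanz i0)]
      have := (coordSubspace F m K).add_mem h1 ((coordSubspace F m K).smul_mem e haK)
      simpa using this
end

section
/- Let F = Z/2Z and let V ⊆ F^m be a subspace for some m ≥ 4. Suppose V ∩ F_I is an almost coordinate subspace of F_I for every proper subset I ⊊ {1, ..., m}. Then either V is the 1-dimensional subspace spanned by (1, 1, ..., 1), or V is an almost coordinate subspace of F^m. -/
instance : Fact (Nat.Prime 2) := ⟨by norm_num⟩

/-- `IsAlmostCoordBasis F m V I P` says that the vectors `e_i` for `i ∈ I` together
with `e_j + e_h` for `(j,h) ∈ P` have pairwise distinct indices (all the `i`'s, `j`'s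
and `h`'s are distinct) and form a basis of `V` (they are linearly independent and span
`V`). -/
def IsAlmostCoordBasis (F : Type) [Field F] (m : ℕ)
    (V : Submodule F (Fin m → F)) (I : Finset (Fin m))
    (P : Finset (Fin m × Fin m)) : Prop :=
  ((I.val + P.val.bind fun p => {p.1, p.2}) : Multiset (Fin m)).Nodup ∧
  LinearIndependent F
    (Sum.elim (fun i : ↥I => (Pi.single (i : Fin m) (1 : F) : Fin m → F))
      (fun p : ↥P => Pi.single (p : Fin m × Fin m).1 (1 : F) +
        Pi.single (p : Fin m × Fin m).2 (1 : F))) ∧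
  Submodule.span F (Set.range
    (Sum.elim (fun i : ↥I => (Pi.single (i : Fin m) (1 : F) : Fin m → F))
      (fun p : ↥P => Pi.single (p : Fin m × Fin m).1 (1 : F) +
        Pi.single (p : Fin m × Fin m).2 (1 : F)))) = V

/-- A subspace of `F^m` is almost coordinate if it has an almost coordinate basis. -/
def IsAlmostCoordinate (F : Type) [Field F] (m : ℕ)
    (V : Submodule F (Fin m → F)) : Prop :=
  ∃ I P, IsAlmostCoordBasis F m V I P

/-!
A subspace `V ⊆ F^m` is almost coordinate exactly when every coordinate `j` in its support is
*free* (`e_j ∈ V`) or *paired* with some `h ≠ j` (`e_j + e_h ∈ V` and all vectors of `V` agree at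
`j` and `h`): the free coordinates and the pairs then form an almost coordinate basis, and
conversely such a basis exhibits every coordinate of the support as free or paired.

If `V` has a nonzero vector with a zero coordinate, then for every coordinate `j` in the support
some `x ∈ V` has `x j ≠ 0` and `x l = 0` for some `l`, and the hypothesis for `{l}ᶜ` makes `j` free
or paired with some `h`, at least among the vectors of `V` vanishing at `l`. If some `z ∈ V` still
separates `j` from `h`, then `z - z h • (e_j + e_h)` vanishes at `h` but not at `j`, and the
hypothesis for `{h}ᶜ` gives a second partner `k` of `j`. A coordinate `l ∉ {j, h, k}` exists as
`m ≥ 4`, and relative to `{l}ᶜ` the partner of `j` would have to be both `h` and `k`; hence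
`e_j ∈ V`. If instead every nonzero vector of `V` has full support, over `𝔽₂` it is the all-ones
vector, so `V` is `0` or the span of `(1, …, 1)`.
-/

theorem Multiset.disjoint_pair_pair_iff {α : Type*} {a b c d : α} :
    Disjoint ({a, b} : Multiset α) {c, d} ↔ a ≠ c ∧ a ≠ d ∧ b ≠ c ∧ b ≠ d := by
  simp only [Multiset.disjoint_left, Multiset.insert_eq_cons, Multiset.mem_cons,
    Multiset.mem_singleton]
  grind

theorem Multiset.nodup_add_bind_pair_iff {α : Type*} (I : Finset α) (P : Finset (α × α)) :
    (I.val + P.val.bind fun p => {p.1, p.2}).Nodup ↔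
      (∀ p ∈ P, p.1 ≠ p.2) ∧ (∀ i ∈ I, ∀ p ∈ P, i ≠ p.1 ∧ i ≠ p.2) ∧
      ∀ p ∈ P, ∀ q ∈ P, p ≠ q → p.1 ≠ q.1 ∧ p.1 ≠ q.2 ∧ p.2 ≠ q.1 ∧ p.2 ≠ q.2 := by
  let pair (p : α × α) : Multiset α := {p.1, p.2}
  have : Std.Symm (Function.onFun Disjoint pair) := ⟨fun _ _ h => h.symm⟩
  have hpair : Multiset.Pairwise (Function.onFun Disjoint pair) P.val ↔
      ∀ p ∈ P, ∀ q ∈ P, p ≠ q → p.1 ≠ q.1 ∧ p.1 ≠ q.2 ∧ p.2 ≠ q.1 ∧ p.2 ≠ q.2 := by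
    simp_rw [← Multiset.disjoint_pair_pair_iff]
    exact ⟨fun h p hp q hq => h.forall hp hq, fun h => P.nodup.pairwise h⟩
  rw [Multiset.nodup_add, Multiset.nodup_bind, hpair]
  simp only [Finset.nodup, true_and, Multiset.disjoint_left, Multiset.mem_bind, Finset.mem_val,
    Multiset.insert_eq_cons, Multiset.nodup_cons, Multiset.mem_singleton,
    Multiset.nodup_singleton, and_true, Multiset.mem_cons, not_or, not_exists, not_and]
  grind

theorem hammingNorm_sub_smul_lt {ι F : Type*} [Fintype ι] [Ring F] [DecidableEq F]
    {y v : ι → F} {j : ι} (hyj : y j ≠ 0) (hvj : v j ≠ 0)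
    (hv : ∀ t, v t ≠ 0 → y t = y j * v t) : hammingNorm (y - y j • v) < hammingNorm y := by
  unfold hammingNorm
  refine Finset.card_lt_card <| (Finset.ssubset_iff_of_subset fun t ht => ?_).mpr ⟨j, ?_, ?_⟩
  · simp only [Finset.mem_filter, Finset.mem_univ, true_and, Pi.sub_apply, Pi.smul_apply,
      smul_eq_mul] at ht ⊢
    intro hyt
    by_cases hvt : v t = 0
    · simp [hyt, hvt] at ht
    · rw [← hv t hvt, sub_self] at ht
      exact ht rfl
  · simpa using hyj
  · simp only [Finset.mem_filter, Finset.mem_univ, true_and, Pi.sub_apply, Pi.smul_apply,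
      smul_eq_mul, not_not]
    rw [← hv j hvj, sub_self]

theorem Submodule.exists_mem_apply_ne_zero_apply_eq_zero {ι F : Type*} [Field F]
    {V : Submodule F (ι → F)} {d y : ι → F} {k l j : ι} (hd : d ∈ V) (hdk : d k ≠ 0)
    (hdl : d l = 0) (hy : y ∈ V) (hyj : y j ≠ 0) : ∃ x ∈ V, x j ≠ 0 ∧ ∃ l, x l = 0 := by
  by_cases hdj : d j = 0
  · exact ⟨y - (y k / d k) • d, V.sub_mem hy (V.smul_mem _ hd), by simp [hdj, hyj], k,
      by simp [hdk]⟩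
  · exact ⟨d, hd, hdj, l, hdl⟩

def almostCoordFamily (F : Type*) [Semiring F] {m : ℕ} (I : Finset (Fin m))
    (P : Finset (Fin m × Fin m)) : I ⊕ P → Fin m → F :=
  Sum.elim (fun i => Pi.single (i : Fin m) 1)
    (fun p => Pi.single (p : Fin m × Fin m).1 1 + Pi.single (p : Fin m × Fin m).2 1)

section AlmostCoordinate

variable {F : Type} [Field F] {m : ℕ}

@[simp]
theorem almostCoordFamily_inl {I : Finset (Fin m)} {P : Finset (Fin m × Fin m)} (i : I) :
    almostCoordFamily F I P (.inl i) = Pi.single (i : Fin m) 1 :=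
  rfl

@[simp]
theorem almostCoordFamily_inr {I : Finset (Fin m)} {P : Finset (Fin m × Fin m)} (p : P) :
    almostCoordFamily F I P (.inr p) =
      Pi.single (p : Fin m × Fin m).1 1 + Pi.single (p : Fin m × Fin m).2 1 :=
  rfl

def IsFreeOrPaired (V : Submodule F (Fin m → F)) (j : Fin m) : Prop :=
  Pi.single j 1 ∈ V ∨ ∃ h ≠ j, Pi.single j 1 + Pi.single h 1 ∈ V ∧ ∀ z ∈ V, z j = z h

noncomputable def freeCoords (V : Submodule F (Fin m → F)) : Finset (Fin m) :=
  (Set.toFinite {j | Pi.single j 1 ∈ V}).toFinset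

noncomputable def pairedCoords (V : Submodule F (Fin m → F)) : Finset (Fin m × Fin m) :=
  (Set.toFinite {p : Fin m × Fin m | p.1 < p.2 ∧ Pi.single p.1 1 + Pi.single p.2 1 ∈ V ∧
    ∀ z ∈ V, z p.1 = z p.2}).toFinset

variable {V : Submodule F (Fin m → F)}

theorem isAlmostCoordBasis_iff {I : Finset (Fin m)} {P : Finset (Fin m × Fin m)} :
    IsAlmostCoordBasis F m V I P ↔ (I.val + P.val.bind fun p => {p.1, p.2}).Nodup ∧
      LinearIndependent F (almostCoordFamily F I P) ∧
      Submodule.span F (Set.range (almostCoordFamily F I P)) = V :=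
  Iff.rfl

@[simp]
theorem mem_freeCoords {j : Fin m} : j ∈ freeCoords V ↔ Pi.single j 1 ∈ V :=
  Set.Finite.mem_toFinset _

@[simp]
theorem mem_pairedCoords {p : Fin m × Fin m} :
    p ∈ pairedCoords V ↔
      p.1 < p.2 ∧ Pi.single p.1 1 + Pi.single p.2 1 ∈ V ∧ ∀ z ∈ V, z p.1 = z p.2 :=
  Set.Finite.mem_toFinset _

theorem IsAlmostCoordinate.isFreeOrPaired (hV : IsAlmostCoordinate F m V) {y : Fin m → F}
    (hy : y ∈ V) {j : Fin m} (hyj : y j ≠ 0) : IsFreeOrPaired V j := by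
  obtain ⟨I, P, hV⟩ := hV
  obtain ⟨hnd, -, hspan⟩ := isAlmostCoordBasis_iff.mp hV
  obtain ⟨hP, hIP, hPP⟩ := Multiset.nodup_add_bind_pair_iff I P |>.mp hnd
  have hgen : ∀ b, almostCoordFamily F I P b ∈ V := fun b =>
    hspan ▸ Submodule.subset_span ⟨b, rfl⟩
  have hsupp : V ≤ coordSubspace F m {i | i ∈ I ∨ ∃ p ∈ P, i = p.1 ∨ i = p.2} := by
    rw [← hspan, Submodule.span_le]
    rintro _ ⟨⟨i, hi⟩ | ⟨p, hp⟩, rfl⟩ t ht <;>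
      simp only [Set.mem_ofPred_eq, not_or, not_exists, not_and] at ht
    · simp [ne_of_mem_of_not_mem hi ht.1 |>.symm]
    · simp [(ht.2 p hp).1, (ht.2 p hp).2]
  have htwin : ∀ p ∈ P, ∀ z ∈ V, z p.1 = z p.2 := by
    intro p hp z hz
    suffices V ≤ LinearMap.eqLocus (LinearMap.proj p.1) (LinearMap.proj p.2) from this hz
    rw [← hspan, Submodule.span_le]
    rintro _ ⟨⟨i, hi⟩ | ⟨q, hq⟩, rfl⟩
    · simp [(hIP i hi p hp).1.symm, (hIP i hi p hp).2.symm]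
    · obtain rfl | hqp := eq_or_ne q p
      · simp [hP q hp, (hP q hp).symm]
      · obtain ⟨h11, h12, h21, h22⟩ := hPP q hq p hp hqp
        simp [h11.symm, h12.symm, h21.symm, h22.symm]
  obtain hj | ⟨p, hp, rfl | rfl⟩ : j ∈ I ∨ ∃ p ∈ P, j = p.1 ∨ j = p.2 := by
    by_contra hj
    exact hyj (hsupp hy j hj)
  · exact .inl (hgen (.inl ⟨j, hj⟩))
  · exact .inr ⟨p.2, (hP p hp).symm, hgen (.inr ⟨p, hp⟩), htwin p hp⟩
  · refine .inr ⟨p.1, hP p hp, ?_, fun z hz => (htwin p hp z hz).symm⟩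
    rw [add_comm]
    exact hgen (.inr ⟨p, hp⟩)

theorem linearIndependent_almostCoordFamily {I : Finset (Fin m)} {P : Finset (Fin m × Fin m)}
    (hnd : (I.val + P.val.bind fun p => {p.1, p.2}).Nodup) :
    LinearIndependent F (almostCoordFamily F I P) := by
  obtain ⟨hP, hIP, hPP⟩ := Multiset.nodup_add_bind_pair_iff I P |>.mp hnd
  let lead : I ⊕ P → Fin m := Sum.elim (↑) fun p => (p : Fin m × Fin m).1
  refine .of_comp (LinearMap.funLeft F F lead) ?_
  convert Pi.linearIndependent_single_one (I ⊕ P) F with b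
  ext b'
  rcases b with ⟨i, hi⟩ | ⟨p, hp⟩ <;> rcases b' with ⟨i', hi'⟩ | ⟨p', hp'⟩
  · simp [lead, LinearMap.funLeft, Pi.single_apply]
  · simp [lead, LinearMap.funLeft, (hIP i hi p' hp').1.symm]
  · simp [lead, LinearMap.funLeft, (hIP i' hi' p hp).1, (hIP i' hi' p hp).2]
  · obtain rfl | hpp := eq_or_ne p' p
    · simp [lead, LinearMap.funLeft, hP p' hp']
    · obtain ⟨h11, h12, -, -⟩ := hPP p' hp' p hp hpp
      simp [lead, LinearMap.funLeft, h11, h12, hpp]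

theorem single_notMem_of_twin {a b : Fin m} (hab : a ≠ b) (htw : ∀ z ∈ V, z a = z b) :
    Pi.single a 1 ∉ V := fun ha => by
  simpa [hab.symm] using htw _ ha

theorem mem_pair_iff_of_twin {a b c d : Fin m} (htw : ∀ z ∈ V, z a = z b) (hcd : c ≠ d)
    (hmem : Pi.single c 1 + Pi.single d 1 ∈ V) :
    (a = c ∨ a = d) ↔ (b = c ∨ b = d) := by
  have := htw _ hmem
  simp only [Pi.add_apply, Pi.single_apply] at this
  split_ifs at this <;> simp_all

theorem nodup_freeCoords_add_pairedCoords :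
    ((freeCoords V).val + (pairedCoords V).val.bind fun p => {p.1, p.2}).Nodup := by
  have hshare : ∀ p ∈ pairedCoords V, ∀ q ∈ pairedCoords V,
      (p.1 = q.1 ∨ p.1 = q.2 ∨ p.2 = q.1 ∨ p.2 = q.2) → p = q := by
    intro p hp q hq hpq
    obtain ⟨hp, -, htw⟩ := mem_pairedCoords.mp hp
    obtain ⟨hq, hmem, -⟩ := mem_pairedCoords.mp hq
    have := mem_pair_iff_of_twin htw hq.ne hmem
    ext <;> grind
  refine Multiset.nodup_add_bind_pair_iff _ _ |>.mpr
    ⟨fun p hp => (mem_pairedCoords.mp hp).1.ne, fun i hi p hp => ?_, fun p hp q hq hpq => ?_⟩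
  · obtain ⟨hlt, -, htw⟩ := mem_pairedCoords.mp hp
    rw [mem_freeCoords] at hi
    exact ⟨fun h => single_notMem_of_twin hlt.ne htw (h ▸ hi),
      fun h => single_notMem_of_twin hlt.ne' (fun z hz => (htw z hz).symm) (h ▸ hi)⟩
  · refine ⟨?_, ?_, ?_, ?_⟩ <;> intro h <;> exact hpq (hshare p hp q hq (by simp [h]))

theorem span_almostCoordFamily_freeCoords_pairedCoords
    (hV : ∀ y ∈ V, ∀ j, y j ≠ 0 → IsFreeOrPaired V j) :
    Submodule.span F (Set.range (almostCoordFamily F (freeCoords V) (pairedCoords V))) = V := by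
  classical
  set U := Submodule.span F (Set.range (almostCoordFamily F (freeCoords V) (pairedCoords V)))
  have hUV : U ≤ V := by
    rw [Submodule.span_le]
    rintro _ ⟨⟨i, hi⟩ | ⟨p, hp⟩, rfl⟩
    · exact mem_freeCoords.mp hi
    · exact (mem_pairedCoords.mp hp).2.1
  refine le_antisymm hUV fun y hy => ?_
  induction hn : hammingNorm y using Nat.strong_induction_on generalizing y with
  | _ n ih =>
  obtain rfl | ⟨j, hyj⟩ := eq_or_ne y 0 |>.imp_right Function.ne_iff.mp
  · exact U.zero_mem
  obtain ⟨v, hvU, hvj, hv⟩ : ∃ v ∈ U, v j ≠ 0 ∧ ∀ t, v t ≠ 0 → y t = y j * v t := by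
    rcases hV y hy j hyj with hfree | ⟨h, hhj, hpair, htw⟩
    · refine ⟨_, Submodule.subset_span ⟨.inl ⟨j, mem_freeCoords.mpr hfree⟩, rfl⟩, by simp,
        fun t ht => ?_⟩
      obtain rfl : t = j := by by_contra htj; simp [htj] at ht
      simp
    · refine ⟨Pi.single j 1 + Pi.single h 1, ?_, by simp [hhj], fun t ht => ?_⟩
      · rcases lt_or_gt_of_ne hhj with hlt | hlt
        · rw [add_comm] at hpair ⊢
          exact Submodule.subset_span ⟨.inr ⟨(h, j), mem_pairedCoords.mpr
            ⟨hlt, hpair, fun z hz => (htw z hz).symm⟩⟩, rfl⟩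
        · exact Submodule.subset_span ⟨.inr ⟨(j, h), mem_pairedCoords.mpr ⟨hlt, hpair, htw⟩⟩, rfl⟩
      · by_cases htj : t = j
        · simp [htj, hhj]
        · obtain rfl : t = h := by by_contra hth; simp [htj, hth] at ht
          simp [htj, htw y hy]
  have hy' := V.sub_mem hy (V.smul_mem (y j) (hUV hvU))
  simpa using U.add_mem (ih _ (hn ▸ hammingNorm_sub_smul_lt hyj hvj hv) _ hy' rfl)
    (U.smul_mem (y j) hvU)

theorem isAlmostCoordinate_of_forall_isFreeOrPaired
    (hV : ∀ y ∈ V, ∀ j, y j ≠ 0 → IsFreeOrPaired V j) : IsAlmostCoordinate F m V :=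
  ⟨freeCoords V, pairedCoords V, isAlmostCoordBasis_iff.mpr
    ⟨nodup_freeCoords_add_pairedCoords,
      linearIndependent_almostCoordFamily nodup_freeCoords_add_pairedCoords,
      span_almostCoordFamily_freeCoords_pairedCoords hV⟩⟩

theorem single_mem_or_exists_pair_of_apply_eq_zero {l : Fin m}
    (hV : IsAlmostCoordinate F m (V ⊓ coordSubspace F m {l}ᶜ)) {x : Fin m → F} (hx : x ∈ V)
    (hxl : x l = 0) {j : Fin m} (hxj : x j ≠ 0) :
    Pi.single j 1 ∈ V ∨
      ∃ h ≠ j, Pi.single j 1 + Pi.single h 1 ∈ V ∧ ∀ y ∈ V, y l = 0 → y j = y h := by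
  have hmem : ∀ y ∈ V, y l = 0 → y ∈ V ⊓ coordSubspace F m {l}ᶜ := fun y hy hyl =>
    ⟨hy, fun i hi => by rwa [Set.notMem_compl_iff.mp hi]⟩
  rcases hV.isFreeOrPaired (hmem x hx hxl) hxj with hfree | ⟨h, hhj, hpair, htw⟩
  · exact .inl hfree.1
  · exact .inr ⟨h, hhj, hpair.1, fun y hy hyl => htw y (hmem y hy hyl)⟩

theorem single_mem_of_two_pairs
    (hV : ∀ l, IsAlmostCoordinate F m (V ⊓ coordSubspace F m {l}ᶜ)) (hm : 4 ≤ m)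
    {j h₁ h₂ : Fin m} (h₁j : h₁ ≠ j) (h₂j : h₂ ≠ j) (h₁₂ : h₁ ≠ h₂)
    (hp₁ : Pi.single j 1 + Pi.single h₁ 1 ∈ V) (hp₂ : Pi.single j 1 + Pi.single h₂ 1 ∈ V) :
    Pi.single j 1 ∈ V := by
  classical
  obtain ⟨l, -, hl⟩ := Finset.exists_mem_notMem_of_card_lt_card (t := Finset.univ)
    (s := {j, h₁, h₂}) (by simpa using Finset.card_le_three.trans_lt (by omega))
  simp only [Finset.mem_insert, Finset.mem_singleton, not_or] at hl
  obtain ⟨hlj, hlh₁, hlh₂⟩ := hl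
  rcases single_mem_or_exists_pair_of_apply_eq_zero (hV l) hp₁ (by simp [hlj, hlh₁])
    (j := j) (by simp [h₁j.symm]) with hfree | ⟨h, hhj, -, htw⟩
  · exact hfree
  have partner : ∀ k ≠ j, k ≠ l → Pi.single j 1 + Pi.single k 1 ∈ V → h = k := by
    intro k hkj hkl hk
    have := htw _ hk (by simp [hlj, hkl.symm])
    by_contra hhk
    simp [hkj.symm, hhj, hhk] at this
  exact absurd ((partner h₁ h₁j (Ne.symm hlh₁) hp₁).symm.trans
    (partner h₂ h₂j (Ne.symm hlh₂) hp₂)) h₁₂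

theorem single_mem_of_pair_of_apply_ne
    (hV : ∀ l, IsAlmostCoordinate F m (V ⊓ coordSubspace F m {l}ᶜ)) (hm : 4 ≤ m)
    {j h : Fin m} (hhj : h ≠ j) (hpair : Pi.single j 1 + Pi.single h 1 ∈ V)
    {z : Fin m → F} (hz : z ∈ V) (hzjh : z j ≠ z h) : Pi.single j 1 ∈ V := by
  set w := z - z h • (Pi.single j 1 + Pi.single h 1)
  have hw : w ∈ V := V.sub_mem hz (V.smul_mem _ hpair)
  have hwh : w h = 0 := by simp [w, hhj]
  have hwj : w j ≠ 0 := by simpa [w, hhj.symm, sub_eq_zero] using hzjh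
  rcases single_mem_or_exists_pair_of_apply_eq_zero (hV h) hw hwh hwj with
    hfree | ⟨k, hkj, hk, htw⟩
  · exact hfree
  · have hkh : k ≠ h := by
      rintro rfl
      exact hwj ((htw w hw hwh).trans hwh)
    exact single_mem_of_two_pairs hV hm hhj hkj hkh.symm hpair hk

theorem isFreeOrPaired_of_apply_eq_zero
    (hV : ∀ l, IsAlmostCoordinate F m (V ⊓ coordSubspace F m {l}ᶜ)) (hm : 4 ≤ m)
    {x : Fin m → F} (hx : x ∈ V) {l j : Fin m} (hxl : x l = 0) (hxj : x j ≠ 0) :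
    IsFreeOrPaired V j := by
  rcases single_mem_or_exists_pair_of_apply_eq_zero (hV l) hx hxl hxj with
    hfree | ⟨h, hhj, hpair, -⟩
  · exact .inl hfree
  by_cases htw : ∀ z ∈ V, z j = z h
  · exact .inr ⟨h, hhj, hpair, htw⟩
  · push Not at htw
    obtain ⟨z, hz, hzjh⟩ := htw
    exact .inl (single_mem_of_pair_of_apply_ne hV hm hhj hpair hz hzjh)

end AlmostCoordinate

/-- Let `F = ℤ/2ℤ` and `V ⊆ F^m` a subspace, `m ≥ 4`. If
`V ∩ F_I` is an almost coordinate subspace for every proper subset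
`I ⊊ {1, …, m}`, then either `V` is the 1-dimensional subspace spanned by
`(1, 1, …, 1)`, or `V` is an almost coordinate subspace of `F^m`. -/
theorem almostCoordinate_or_span_one (m : ℕ) (hm : 4 ≤ m)
    (V : Submodule (ZMod 2) (Fin m → ZMod 2))
    (h : ∀ I : Set (Fin m), I ≠ Set.univ →
      IsAlmostCoordinate (ZMod 2) m (V ⊓ coordSubspace (ZMod 2) m I)) :
    V = Submodule.span (ZMod 2) {(fun _ => 1 : Fin m → ZMod 2)} ∨
      IsAlmostCoordinate (ZMod 2) m V := by
  have hV l := h {l}ᶜ (Set.compl_ne_univ.mpr (Set.singleton_nonempty l))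
  by_cases hd : ∃ d ∈ V, ∃ k l, d k ≠ 0 ∧ d l = 0
  · obtain ⟨d, hd, k, l, hdk, hdl⟩ := hd
    refine .inr (isAlmostCoordinate_of_forall_isFreeOrPaired fun y hy j hyj => ?_)
    obtain ⟨x, hx, hxj, l, hxl⟩ := V.exists_mem_apply_ne_zero_apply_eq_zero hd hdk hdl hy hyj
    exact isFreeOrPaired_of_apply_eq_zero hV hm hx hxl hxj
  push Not at hd
  have hone : ∀ y ∈ V, ∀ j, y j ≠ 0 → y = fun _ => 1 := fun y hy j hyj =>
    funext fun l => Fin.eq_one_of_ne_zero _ (hd y hy j l hyj)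
  by_cases h1 : (fun _ => 1 : Fin m → ZMod 2) ∈ V
  · refine .inl (le_antisymm (fun y hy => ?_) ((Submodule.span_singleton_le_iff_mem _ _).mpr h1))
    by_cases hy0 : y = 0
    · exact hy0 ▸ Submodule.zero_mem _
    · obtain ⟨j, hyj⟩ := Function.ne_iff.mp hy0
      exact hone y hy j hyj ▸ Submodule.mem_span_singleton_self _
  · exact .inr (isAlmostCoordinate_of_forall_isFreeOrPaired fun y hy j hyj =>
      absurd (hone y hy j hyj ▸ hy) h1)
end

section
/- Let W be a finite group, P a W-lattice, λ: P → Z/nZ a surjective W-module homomorphism where W acts trivially on Z/nZ, and Q = ker λ. Let S ⊆ (Z/nZ)^m be a cyclic subgroup, and let P^m_S = (λ^m)⁻¹(S) ⊆ P^m, a W-submodule for the diagonal W-action on P^m. Then P^m_S is isomorphic as a W-module to P¹_{S₁} ⊕ Q^{m-1} for some subgroup S₁ ⊆ Z/nZ isomorphic to S, where P¹_{S₁} = λ⁻¹(S₁) ⊆ P. -/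
section Preimage

variable {P : Type} [AddCommGroup P] {n m : ℕ}

/-- The componentwise application `λ^m : P^m → (ℤ/nℤ)^m` of `λ : P → ℤ/nℤ`. -/
def piHom (lam : P →+ ZMod n) (m : ℕ) : (Fin m → P) →+ (Fin m → ZMod n) where
  toFun f := fun i => lam (f i)
  map_zero' := by funext i; simp
  map_add' f g := by funext i; simp

/-- `P^m_S`, the preimage of `S ⊆ (ℤ/nℤ)^m` under `λ^m`. -/
def preSub (lam : P →+ ZMod n) (m : ℕ) (S : AddSubgroup (Fin m → ZMod n)) :
    AddSubgroup (Fin m → P) :=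
  S.comap (piHom lam m)

end Preimage

namespace Module.Basis

variable {R M ι : Type*} [CommRing R] [IsDomain R] [IsPrincipalIdealRing R]
  [AddCommGroup M] [Module R M] [Finite ι] [Nonempty ι]

theorem exists_basis_eq_smul (b : Basis ι R M) (v : M) :
    ∃ (b' : Basis ι R M) (i : ι) (c : R), v = c • b' i := by
  rcases eq_or_ne v 0 with rfl | hv
  · exact ⟨b, Classical.arbitrary ι, 0, (zero_smul R _).symm⟩
  have := b.isTorsionFree
  obtain ⟨k, snf⟩ := (R ∙ v).smithNormalForm b
  have hk : k = 1 := by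
    have := (LinearEquiv.toSpanNonzeroSingleton R M v hv).finrank_eq
    rwa [Module.finrank_self, Module.finrank_eq_card_basis snf.bN, Fintype.card_fin,
      eq_comm] at this
  subst hk
  have hv := congrArg Subtype.val
    (snf.bN.sum_repr ⟨v, Submodule.mem_span_singleton_self v⟩)
  rw [Fin.sum_univ_one, Submodule.coe_smul, snf.snf, smul_smul] at hv
  exact ⟨snf.bM, _, _, hv.symm⟩

end Module.Basis

namespace Matrix

variable {ι M N : Type*} [Fintype ι] [AddCommGroup M] [AddCommGroup N]

theorem exists_unit_mulVec_eq_single {R : Type*} [CommRing R] [IsDomain R]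
    [IsPrincipalIdealRing R] [DecidableEq ι] (i₀ : ι) (v : ι → R) :
    ∃ (U : (Matrix ι ι R)ˣ) (d : R), (U : Matrix ι ι R).mulVec v = Pi.single i₀ d := by
  have : Nonempty ι := ⟨i₀⟩
  obtain ⟨b, i, c, rfl⟩ := (Pi.basisFun R ι).exists_basis_eq_smul v
  let E := b.equiv (Pi.basisFun R ι) (Equiv.swap i i₀)
  refine ⟨GeneralLinearGroup.toLin.symm (.ofLinearEquiv E), c, ?_⟩
  rw [← mulVecLin_apply, ← GeneralLinearGroup.coe_toLin, MulEquiv.apply_symm_apply]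
  change E (c • b i) = _
  simp [E, ← Pi.single_smul']

def intMulVec (A : Matrix ι ι ℤ) : (ι → M) →+ (ι → M) where
  toFun x i := ∑ j, A i j • x j
  map_zero' := by ext; simp
  map_add' x y := by ext; simp [Finset.sum_add_distrib]

theorem intMulVec_apply (A : Matrix ι ι ℤ) (x : ι → M) (i : ι) :
    A.intMulVec x i = ∑ j, A i j • x j := rfl

theorem intMulVec_mul (A B : Matrix ι ι ℤ) (x : ι → M) :
    (A * B).intMulVec x = A.intMulVec (B.intMulVec x) := by
  ext i
  simp only [intMulVec_apply, mul_apply, Finset.smul_sum, Finset.sum_smul, smul_smul]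
  exact Finset.sum_comm

theorem intMulVec_one [DecidableEq ι] (x : ι → M) : (1 : Matrix ι ι ℤ).intMulVec x = x := by
  ext i
  simp [intMulVec_apply, one_apply, ite_smul]

theorem map_intMulVec (f : M →+ N) (A : Matrix ι ι ℤ) (x : ι → M) :
    (fun i => f (A.intMulVec x i)) = A.intMulVec (fun i => f (x i)) := by
  ext i
  simp [intMulVec_apply]

theorem intMulVec_smul {G : Type*} [DistribSMul G M] (A : Matrix ι ι ℤ) (g : G)
    (x : ι → M) : A.intMulVec (g • x) = g • A.intMulVec x :=
  (map_intMulVec (DistribSMul.toAddMonoidHom M g) A x).symm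

theorem intMulVec_intCast {R : Type*} [Ring R] (A : Matrix ι ι ℤ) (v : ι → ℤ) :
    A.intMulVec (fun i => (v i : R)) = fun i => ((A.mulVec v i : ℤ) : R) := by
  ext i
  simp [intMulVec_apply, mulVec, dotProduct]

variable [DecidableEq ι]

def intMulVecEquiv (U : (Matrix ι ι ℤ)ˣ) : (ι → M) ≃+ (ι → M) where
  toFun := (U : Matrix ι ι ℤ).intMulVec
  invFun := (↑U⁻¹ : Matrix ι ι ℤ).intMulVec
  left_inv x := by rw [← intMulVec_mul, U.inv_mul, intMulVec_one]
  right_inv x := by rw [← intMulVec_mul, U.mul_inv, intMulVec_one]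
  map_add' := map_add _

@[simp]
theorem intMulVecEquiv_symm_apply (U : (Matrix ι ι ℤ)ˣ) (x : ι → M) :
    (intMulVecEquiv U).symm x = (↑U⁻¹ : Matrix ι ι ℤ).intMulVec x := rfl

theorem exists_unit_intMulVec_eq_single {n : ℕ} (i₀ : ι) (g : ι → ZMod n) :
    ∃ (U : (Matrix ι ι ℤ)ˣ) (d : ZMod n), (U : Matrix ι ι ℤ).intMulVec g = Pi.single i₀ d := by
  obtain ⟨v, rfl⟩ := (ZMod.intCast_surjective (n := n)).comp_left g
  obtain ⟨U, d, hU⟩ := exists_unit_mulVec_eq_single i₀ v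
  refine ⟨U, d, ?_⟩
  ext i
  change (U : Matrix ι ι ℤ).intMulVec (fun j => (v j : ZMod n)) i = _
  rw [intMulVec_intCast, hU]
  by_cases hi : i = i₀ <;> simp [hi]

end Matrix

open Matrix

theorem AddSubgroup.exists_map_intMulVecEquiv_eq_map_single {ι : Type*} [Fintype ι]
    [DecidableEq ι] {n : ℕ} (i₀ : ι) (S : AddSubgroup (ι → ZMod n)) [IsAddCyclic S] :
    ∃ (U : (Matrix ι ι ℤ)ˣ) (T : AddSubgroup (ZMod n)),
      S.map (intMulVecEquiv U).toAddMonoidHom =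
        T.map (AddMonoidHom.single (fun _ => ZMod n) i₀) := by
  obtain ⟨g, rfl⟩ := (S.isAddCyclic_iff_exists_zmultiples_eq_top).mp ‹_›
  obtain ⟨U, d, hU⟩ := exists_unit_intMulVec_eq_single i₀ g
  refine ⟨U, AddSubgroup.zmultiples d, ?_⟩
  rw [AddMonoidHom.map_zmultiples, AddMonoidHom.map_zmultiples]
  exact congrArg _ hU

theorem AddSubgroup.mem_map_single_zero_iff {G : Type*} [AddGroup G] {k : ℕ}
    (T : AddSubgroup G) (x : Fin (k + 1) → G) :
    x ∈ T.map (AddMonoidHom.single (fun _ => G) 0) ↔ x 0 ∈ T ∧ ∀ i : Fin k, x i.succ = 0 := by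
  constructor
  · rintro ⟨a, ha, rfl⟩
    simpa using ha
  · rintro ⟨h0, hsucc⟩
    refine ⟨x 0, h0, funext fun i => Fin.cases ?_ (fun i => ?_) i⟩ <;> simp [hsucc]

theorem AddSubgroup.smul_mem_comap_of_map_smul {G M N : Type*} [SMul G M] [AddGroup M]
    [AddGroup N] (f : M →+ N) (hf : ∀ (g : G) (x : M), f (g • x) = f x) (T : AddSubgroup N) :
    ∀ (g : G) (x : M), x ∈ T.comap f → g • x ∈ T.comap f := by
  intro g x hx
  rwa [AddSubgroup.mem_comap, hf]

section PreimageDecomposition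

variable {P : Type} [AddCommGroup P] {n m : ℕ} (lam : P →+ ZMod n)

theorem piHom_intMulVec (A : Matrix (Fin m) (Fin m) ℤ) (x : Fin m → P) :
    piHom lam m (A.intMulVec x) = A.intMulVec (piHom lam m x) :=
  map_intMulVec lam A x

theorem map_preSub_intMulVecEquiv (U : (Matrix (Fin m) (Fin m) ℤ)ˣ)
    (S : AddSubgroup (Fin m → ZMod n)) :
    (preSub lam m S).map (intMulVecEquiv U).toAddMonoidHom =
      preSub lam m (S.map (intMulVecEquiv U).toAddMonoidHom) := by
  ext x
  simp only [preSub, AddSubgroup.mem_map_equiv, AddSubgroup.mem_comap, intMulVecEquiv_symm_apply,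
    piHom_intMulVec]

def preSubMapSingleEquiv {k : ℕ} (T : AddSubgroup (ZMod n)) :
    preSub lam (k + 1) (T.map (AddMonoidHom.single (fun _ => ZMod n) 0)) ≃+
      T.comap lam × (Fin k → lam.ker) where
  toFun x := (⟨x.1 0, ((T.mem_map_single_zero_iff _).mp x.2).1⟩,
    fun i => ⟨x.1 i.succ, ((T.mem_map_single_zero_iff _).mp x.2).2 i⟩)
  invFun p := ⟨Fin.cons p.1 (fun i => p.2 i),
    (T.mem_map_single_zero_iff _).mpr ⟨p.1.2, fun i => (p.2 i).2⟩⟩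
  left_inv _ := Subtype.ext (funext fun i => Fin.cases rfl (fun _ => rfl) i)
  right_inv _ := rfl
  map_add' _ _ := rfl

end PreimageDecomposition

theorem preimage_cyclic_decomposition_general (W : Type) [Group W]
    (n m : ℕ) (hm : 1 ≤ m)
    (P : Type) [AddCommGroup P] [DistribMulAction W P]
    (lam : P →+ ZMod n)
    (heq : ∀ (w : W) (x : P), lam (w • x) = lam x)
    (S : AddSubgroup (Fin m → ZMod n)) (hcyc : IsAddCyclic S) :
    ∃ S₁ : AddSubgroup (ZMod n), Nonempty (S₁ ≃+ S) ∧
      ∃ (h1 : ∀ (w : W) (x : Fin m → P),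
            x ∈ preSub lam m S → w • x ∈ preSub lam m S)
        (h2 : ∀ (w : W) (x : P), x ∈ S₁.comap lam → w • x ∈ S₁.comap lam)
        (h3 : ∀ (w : W) (x : P), x ∈ lam.ker → w • x ∈ lam.ker),
        letI := subAction _ h1
        letI := subAction _ h2
        letI := subAction _ h3
        ∃ e : ↥(preSub lam m S) ≃+ (↥(S₁.comap lam) × (Fin (m - 1) → ↥lam.ker)),
          ∀ (w : W) (x : ↥(preSub lam m S)), e (w • x) = w • e x := by
  obtain ⟨k, rfl⟩ : ∃ k, m = k + 1 := ⟨m - 1, by omega⟩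
  obtain ⟨U, T, hUT⟩ := S.exists_map_intMulVecEquiv_eq_map_single 0
  have hTS : Nonempty (T ≃+ S) :=
    ⟨(T.equivMapOfInjective _ (Pi.single_injective (M := fun _ => ZMod n) 0)).trans
      ((AddEquiv.addSubgroupCongr hUT.symm).trans
        (AddEquiv.addSubgroupMap (intMulVecEquiv U) S).symm)⟩
  have hPS : (preSub lam (k + 1) S).map (intMulVecEquiv U).toAddMonoidHom =
      preSub lam (k + 1) (T.map (AddMonoidHom.single _ 0)) := by
    rw [map_preSub_intMulVecEquiv, hUT]
  refine ⟨T, hTS, AddSubgroup.smul_mem_comap_of_map_smul (piHom lam (k + 1))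
    (fun w x => funext fun i => heq w (x i)) S, AddSubgroup.smul_mem_comap_of_map_smul lam heq T,
    AddSubgroup.smul_mem_comap_of_map_smul lam heq ⊥,
    ((AddEquiv.addSubgroupMap (intMulVecEquiv (M := P) U) (preSub lam (k + 1) S)).trans
      (AddEquiv.addSubgroupCongr hPS)).trans (preSubMapSingleEquiv lam T), fun w x => ?_⟩
  -- both components of `e x` are coordinates of `U x`
  refine Prod.ext (Subtype.ext ?_) (funext fun i => Subtype.ext ?_) <;>
    exact congrFun (intMulVec_smul _ w (x : Fin (k + 1) → P)) _

/-- Let `W` be a finite group, `P` a `W`-lattice,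
`λ : P → ℤ/nℤ` a surjective `W`-map (trivial action on `ℤ/nℤ`), `Q = ker λ`.
If `S ⊆ (ℤ/nℤ)^m` is a cyclic subgroup, then `P^m_S = (λ^m)⁻¹(S)` is
`W`-equivariantly isomorphic to `P¹_{S₁} ⊕ Q^{m-1}` for some subgroup
`S₁ ⊆ ℤ/nℤ` isomorphic to `S` (diagonal `W`-action on `P^m`). -/
theorem preimage_cyclic_decomposition (W : Type) [Group W] [Finite W]
    (n m : ℕ) (hn : 1 ≤ n) (hm : 1 ≤ m)
    (P : Type) [AddCommGroup P] [DistribMulAction W P]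
    [Module.Free ℤ P] [Module.Finite ℤ P]
    (lam : P →+ ZMod n) (hsurj : Function.Surjective lam)
    (heq : ∀ (w : W) (x : P), lam (w • x) = lam x)
    (S : AddSubgroup (Fin m → ZMod n)) (hcyc : IsAddCyclic S) :
    ∃ S₁ : AddSubgroup (ZMod n), Nonempty (S₁ ≃+ S) ∧
      ∃ (h1 : ∀ (w : W) (x : Fin m → P),
            x ∈ preSub lam m S → w • x ∈ preSub lam m S)
        (h2 : ∀ (w : W) (x : P), x ∈ S₁.comap lam → w • x ∈ S₁.comap lam)
        (h3 : ∀ (w : W) (x : P), x ∈ lam.ker → w • x ∈ lam.ker),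
        letI := subAction _ h1
        letI := subAction _ h2
        letI := subAction _ h3
        ∃ e : ↥(preSub lam m S) ≃+ (↥(S₁.comap lam) × (Fin (m - 1) → ↥lam.ker)),
          ∀ (w : W) (x : ↥(preSub lam m S)), e (w • x) = w • e x :=
  preimage_cyclic_decomposition_general W n m hm P lam heq S hcyc
end

section
/- Let W be a finite group, P a W-lattice, λ: P → Z/nZ a surjective W-module homomorphism with W acting trivially on Z/nZ. If a subgroup S ⊆ (Z/nZ)^m contains an element of order n, then the W-module P^m_S := (λ^m)⁻¹(S) ⊆ P^m (with diagonal W-action) has a direct summand isomorphic to P. -/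
open Finset

section Primitive

variable {ι : Type*} [Fintype ι] {n : ℕ}

theorem isCoprime_gcd_of_addOrderOf_intCast (hn : n ≠ 0) (c : ι → ℤ)
    (hc : addOrderOf (fun i => (c i : ZMod n)) = n) :
    IsCoprime (univ.gcd c) n := by
  rw [Int.isCoprime_iff_gcd_eq_one]
  set g := Int.gcd (univ.gcd c) n
  have hgn : g ∣ n := by exact_mod_cast Int.gcd_dvd_right (univ.gcd c) n
  have hg : 0 < g := Int.gcd_pos_of_ne_zero_right _ (by exact_mod_cast hn)
  have hkill : (n / g) • (fun i => (c i : ZMod n)) = 0 := by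
    funext i
    obtain ⟨k, hk⟩ := (Int.gcd_dvd_left (univ.gcd c) n).trans (gcd_dvd (mem_univ i))
    rw [Pi.smul_apply, hk, nsmul_eq_mul]
    push_cast
    rw [← mul_assoc, ← Nat.cast_mul, Nat.div_mul_cancel hgn, ZMod.natCast_self, zero_mul]
    rfl
  have hdvd : n ∣ n / g := by
    have := addOrderOf_dvd_of_nsmul_eq_zero hkill
    rwa [hc] at this
  have hself : n / g = n := (Nat.div_le_self n g).antisymm
    (Nat.le_of_dvd (Nat.div_pos (Nat.le_of_dvd (by omega) hgn) hg) hdvd)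
  exact (Nat.div_eq_self.mp hself).resolve_left hn

theorem exists_gcd_eq_one_intCast_mem_zmultiples (c : ι → ℤ) (hc : c ≠ 0)
    (hcop : IsCoprime (univ.gcd c) n) :
    ∃ e : ι → ℤ, univ.gcd e = 1 ∧
      (fun i => (e i : ZMod n)) ∈ AddSubgroup.zmultiples (fun i => (c i : ZMod n)) := by
  obtain ⟨i₀, hi₀⟩ := Function.ne_iff.mp hc
  obtain ⟨u, v, huv⟩ := hcop
  refine ⟨fun i => c i / univ.gcd c, gcd_div_eq_one (mem_univ i₀) hi₀, u, ?_⟩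
  funext i
  set e := c i / univ.gcd c
  have hce : c i = univ.gcd c * e := (Int.mul_ediv_cancel' (gcd_dvd (mem_univ i))).symm
  have hcong : e = u * c i + v * e * n := by linear_combination (-e) * huv - u * hce
  show u • (c i : ZMod n) = (e : ZMod n)
  rw [hcong, zsmul_eq_mul]
  push_cast
  simp

theorem exists_gcd_eq_one_intCast_mem [Nonempty ι] (hn : n ≠ 0) (S : AddSubgroup (ι → ZMod n))
    (hord : ∃ x ∈ S, addOrderOf x = n) :
    ∃ d : ι → ℤ, univ.gcd d = 1 ∧ (fun i => (d i : ZMod n)) ∈ S := by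
  obtain ⟨x, hxS, hx⟩ := hord
  set c : ι → ℤ := fun i => (x i).cast
  have hxc : (fun i => (c i : ZMod n)) = x := funext fun i => ZMod.intCast_zmod_cast (x i)
  by_cases hc : c = 0
  · have hx0 : x = 0 := by rw [← hxc, hc]; ext; simp
    have hn1 : n = 1 := by rw [← hx, hx0, addOrderOf_zero]
    subst hn1
    obtain ⟨i₀⟩ := ‹Nonempty ι›
    exact ⟨1, Int.eq_one_of_dvd_one Int.finsetGcd_nonneg (gcd_dvd (mem_univ i₀)),
      Subsingleton.elim (0 : ι → ZMod 1) (fun i => ((1 : ι → ℤ) i : ZMod 1)) ▸ S.zero_mem⟩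
  · obtain ⟨d, hd, hdx⟩ := exists_gcd_eq_one_intCast_mem_zmultiples c hc
      (isCoprime_gcd_of_addOrderOf_intCast hn c (hxc ▸ hx))
    exact ⟨d, hd, AddSubgroup.zmultiples_le_of_mem (hxc ▸ hxS) hdx⟩

end Primitive

section Splitting

variable {P : Type*} [AddCommGroup P] {ι : Type*}

def zsmulPi (d : ι → ℤ) : P →+ (ι → P) :=
  AddMonoidHom.pi fun i => DistribSMul.toAddMonoidHom P (d i)

@[simp]
theorem zsmulPi_apply (d : ι → ℤ) (p : P) (i : ι) : zsmulPi d p i = d i • p := rfl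

variable {W : Type*} [Monoid W] [DistribMulAction W P]

theorem zsmulPi_smul (d : ι → ℤ) (w : W) (p : P) : zsmulPi d (w • p) = w • zsmulPi d p := by
  funext i
  exact (smul_comm w (d i) p).symm

variable [Fintype ι]

def weightedSum (a : ι → ℤ) : (ι → P) →+ P :=
  ∑ i, a i • Pi.evalAddMonoidHom (fun _ => P) i

@[simp]
theorem weightedSum_apply (a : ι → ℤ) (y : ι → P) : weightedSum a y = ∑ i, a i • y i := by
  simp [weightedSum]

theorem weightedSum_zsmulPi {a d : ι → ℤ} (had : ∑ i, d i * a i = 1) (p : P) :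
    weightedSum a (zsmulPi d p) = p := by
  simp only [weightedSum_apply, zsmulPi_apply, smul_smul, ← sum_smul, mul_comm (a _), had,
    one_smul]

theorem weightedSum_smul (a : ι → ℤ) (w : W) (y : ι → P) :
    weightedSum a (w • y) = w • weightedSum a y := by
  simp only [weightedSum_apply, Pi.smul_apply, smul_sum, smul_comm w]

end Splitting

section PreSub

variable {P : Type} [AddCommGroup P] {n m : ℕ} {lam : P →+ ZMod n}
  {S : AddSubgroup (Fin m → ZMod n)}

theorem smul_mem_preSub {W : Type*} [SMul W P] (heq : ∀ (w : W) (x : P), lam (w • x) = lam x)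
    (w : W) {x : Fin m → P} (hx : x ∈ preSub lam m S) : w • x ∈ preSub lam m S := by
  have hfix : piHom lam m (w • x) = piHom lam m x := funext fun i => heq w (x i)
  rwa [preSub, AddSubgroup.mem_comap, hfix]

theorem zsmulPi_mem_preSub {d : Fin m → ℤ} (hd : (fun i => (d i : ZMod n)) ∈ S) (p : P) :
    zsmulPi d p ∈ preSub lam m S := by
  have himage : piHom lam m (zsmulPi d p) = ((lam p).cast : ℤ) • fun i => (d i : ZMod n) := by
    funext i
    simp [piHom, mul_comm]
  rw [preSub, AddSubgroup.mem_comap, himage]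
  exact S.zsmul_mem hd _

end PreSub

theorem preimage_has_summand_P_general (W : Type) [Group W]
    (n m : ℕ) (hn : 1 ≤ n) (hm : 1 ≤ m)
    (P : Type) [AddCommGroup P] [DistribMulAction W P]
    (lam : P →+ ZMod n)
    (heq : ∀ (w : W) (x : P), lam (w • x) = lam x)
    (S : AddSubgroup (Fin m → ZMod n))
    (hord : ∃ x ∈ S, addOrderOf x = n) :
    ∃ h1 : ∀ (w : W) (x : Fin m → P),
        x ∈ preSub lam m S → w • x ∈ preSub lam m S,
      letI := subAction _ h1
      ∃ (f : P →+ ↥(preSub lam m S)) (r : ↥(preSub lam m S) →+ P),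
        (∀ (w : W) (x : P), f (w • x) = w • f x) ∧
        (∀ (w : W) (x : ↥(preSub lam m S)), r (w • x) = w • r x) ∧
        r.comp f = AddMonoidHom.id P := by
  have : Nonempty (Fin m) := Fin.pos_iff_nonempty.mp hm
  obtain ⟨d, hd, hdS⟩ := exists_gcd_eq_one_intCast_mem (by omega) S hord
  obtain ⟨a, ha⟩ := gcd_eq_sum_mul univ d
  refine ⟨fun w _ hx => smul_mem_preSub heq w hx,
    (zsmulPi d).codRestrict _ (zsmulPi_mem_preSub hdS),
    (weightedSum a).comp (preSub lam m S).subtype,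
    fun w p => Subtype.ext (zsmulPi_smul d w p),
    fun w y => weightedSum_smul a w (y : Fin m → P), ?_⟩
  ext p
  exact weightedSum_zsmulPi (ha ▸ hd) p

/-- Let `W` be a finite group, `P` a `W`-lattice,
`λ : P → ℤ/nℤ` a surjective `W`-map (trivial action on `ℤ/nℤ`). If a subgroup
`S ⊆ (ℤ/nℤ)^m` contains an element of order `n`, then the `W`-module
`P^m_S = (λ^m)⁻¹(S)` (diagonal action) has a direct summand isomorphic to `P`. -/
theorem preimage_has_summand_P (W : Type) [Group W] [Finite W]
    (n m : ℕ) (hn : 1 ≤ n) (hm : 1 ≤ m)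
    (P : Type) [AddCommGroup P] [DistribMulAction W P]
    [Module.Free ℤ P] [Module.Finite ℤ P]
    (lam : P →+ ZMod n) (hsurj : Function.Surjective lam)
    (heq : ∀ (w : W) (x : P), lam (w • x) = lam x)
    (S : AddSubgroup (Fin m → ZMod n))
    (hord : ∃ x ∈ S, addOrderOf x = n) :
    ∃ h1 : ∀ (w : W) (x : Fin m → P),
        x ∈ preSub lam m S → w • x ∈ preSub lam m S,
      letI := subAction _ h1
      ∃ (f : P →+ ↥(preSub lam m S)) (r : ↥(preSub lam m S) →+ P),
        (∀ (w : W) (x : P), f (w • x) = w • f x) ∧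
        (∀ (w : W) (x : ↥(preSub lam m S)), r (w • x) = w • r x) ∧
        r.comp f = AddMonoidHom.id P :=
  preimage_has_summand_P_general W n m hn hm P lam heq S hord
end
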